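/- For every n ≥ 1, the open interval (λ_{n+1}, λ_n) contains no element of 𝓛, and (λ_1, ∞) ∩ 𝓛 is empty; moreover each λ_n (n ≥ 1) and λ_0 belong to 𝓛. Consequently, the elements of 𝓛 exceeding λ_0 are exactly the λ_n for n ≥ 1. -/

import Mathlib

open Filter Set MeasureTheory

noncomputable def T (m : ℕ) (x : ℝ) : ℝ := (1 - x) / m


noncomputable def orb (m : ℕ → ℕ) : ℕ → ℝ
  | 0 => 0
  | n + 1 => T (m n) (orb m n)

noncomputable def Lset : Set ℝ :=
  {x | ∃ m : ℕ → ℕ, (∀ i, 2 ≤ m i) ∧ Filter.atTop.liminf (fun n => orb m n) = x}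


def Mword : ℕ → List ℕ
  | 0 => []
  | 1 => [2]
  | 2 => [3]
  | n + 3 => Mword (n + 2) ++ Mword (n + 1) ++ Mword (n + 1)

noncomputable def compList (l : List ℕ) (x : ℝ) : ℝ := l.foldr (fun m y => T m y) x

def Minf (k : ℕ) : ℕ := (Mword (k + 3)).getD k 0

noncomputable def lam0 : ℝ :=
  ∑' l : ℕ, (-1 : ℝ) ^ l / ∏ t ∈ Finset.range (l + 1), (Minf t : ℝ)

/-! ### Infrastructure -/

namespace Pf

/-- apply digits left-to-right (dynamical order) -/
noncomputable def apL (l : List ℕ) (x : ℝ) : ℝ := l.foldl (fun y d => T d y) x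

@[simp] lemma apL_nil (x : ℝ) : apL [] x = x := rfl

@[simp] lemma apL_cons (d : ℕ) (l : List ℕ) (x : ℝ) :
    apL (d :: l) x = apL l (T d x) := rfl

lemma apL_append (a b : List ℕ) (x : ℝ) : apL (a ++ b) x = apL b (apL a x) :=
  List.foldl_append

lemma compList_eq_apL (l : List ℕ) (x : ℝ) : compList l x = apL l.reverse x := by
  unfold compList apL
  rw [List.foldl_reverse]

/-- real product of the digits -/
noncomputable def PP (l : List ℕ) : ℝ := (l.map (fun d => (d : ℝ))).prod

@[simp] lemma PP_nil : PP [] = 1 := rfl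

lemma PP_cons (d : ℕ) (l : List ℕ) : PP (d :: l) = d * PP l := by
  simp [PP]

lemma PP_append (a b : List ℕ) : PP (a ++ b) = PP a * PP b := by
  simp [PP]

lemma PP_single (d : ℕ) : PP [d] = d := by simp [PP]

lemma PP_reverse (l : List ℕ) : PP l.reverse = PP l := by
  induction l with
  | nil => rfl
  | cons d l ih =>
      rw [List.reverse_cons, PP_append, ih, PP_cons, PP_cons, PP_nil]
      ring

lemma PP_ge_pow (l : List ℕ) (hl : ∀ d ∈ l, 2 ≤ d) : (2:ℝ) ^ l.length ≤ PP l := by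
  induction l with
  | nil => simp
  | cons d l ih =>
      have hd : (2:ℝ) ≤ (d:ℝ) := by exact_mod_cast hl d (by simp)
      have ih' := ih (fun x hx => hl x (by simp [hx]))
      have h2 : (0:ℝ) < 2 ^ l.length := by positivity
      rw [PP_cons, List.length_cons, pow_succ]
      calc (2:ℝ)^l.length * 2 = 2 * 2^l.length := by ring
        _ ≤ (d:ℝ) * PP l := by
            apply mul_le_mul hd ih' (le_of_lt h2) (by positivity)

lemma PP_pos (l : List ℕ) (hl : ∀ d ∈ l, 2 ≤ d) : 0 < PP l := by
  have := PP_ge_pow l hl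
  have h2 : (0:ℝ) < 2 ^ l.length := by positivity
  linarith

lemma PP_ge_one (l : List ℕ) (hl : ∀ d ∈ l, 2 ≤ d) : 1 ≤ PP l := by
  have := PP_ge_pow l hl
  have h2 : (1:ℝ) ≤ 2 ^ l.length := one_le_pow₀ (by norm_num)
  linarith

lemma PP_ge_two (l : List ℕ) (hl : ∀ d ∈ l, 2 ≤ d) (h1 : 1 ≤ l.length) :
    2 ≤ PP l := by
  have := PP_ge_pow l hl
  have h2 : (2:ℝ) ≤ 2 ^ l.length := by
    calc (2:ℝ) = 2^1 := (pow_one 2).symm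
      _ ≤ 2 ^ l.length := pow_le_pow_right₀ (by norm_num) h1
  linarith

/-- the key affine identity -/
lemma apL_sub (l : List ℕ) (hl : ∀ d ∈ l, 2 ≤ d) (x y : ℝ) :
    apL l x - apL l y = (-1) ^ l.length * (x - y) / PP l := by
  induction l generalizing x y with
  | nil => simp
  | cons d l ih =>
      have hd : (2:ℕ) ≤ d := hl d (by simp)
      have hdR : (0:ℝ) < d := by exact_mod_cast Nat.lt_of_lt_of_le (by norm_num) hd
      have ih' := ih (fun z hz => hl z (by simp [hz])) (T d x) (T d y)
      have hT : T d x - T d y = (y - x) / d := by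
        unfold T; field_simp; ring
      rw [apL_cons, apL_cons, ih', hT, PP_cons, List.length_cons]
      have hP : PP l ≠ 0 := ne_of_gt (PP_pos l (fun z hz => hl z (by simp [hz])))
      field_simp
      ring

end Pf
namespace Pf

/-! ### Words -/

def W (n : ℕ) : List ℕ := (Mword n).reverse

lemma Mword_rec (n : ℕ) : Mword (n+3) = Mword (n+2) ++ Mword (n+1) ++ Mword (n+1) := rfl

lemma W_one : W 1 = [2] := rfl
lemma W_two : W 2 = [3] := rfl
lemma W_three : W 3 = [2,2,3] := rfl
lemma W_four : W 4 = [3,3,2,2,3] := rfl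
lemma W_five : W 5 = [2,2,3,2,2,3,3,3,2,2,3] := rfl

lemma W_rec (n : ℕ) : W (n+3) = W (n+1) ++ W (n+1) ++ W (n+2) := by
  unfold W
  rw [Mword_rec, List.reverse_append, List.reverse_append]
  rw [List.append_assoc]

lemma Mword_digits : ∀ n, ∀ d ∈ Mword n, d = 2 ∨ d = 3 := by
  intro n
  induction n using Nat.strong_induction_on with
  | _ n ih =>
    match n with
    | 0 => simp [Mword]
    | 1 => simp [Mword]
    | 2 => simp [Mword]
    | (m+3) =>
      rw [Mword_rec]
      intro d hd
      rcases List.mem_append.1 hd with hd' | hd'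
      · rcases List.mem_append.1 hd' with h2 | h2
        · exact ih (m+2) (by omega) d h2
        · exact ih (m+1) (by omega) d h2
      · exact ih (m+1) (by omega) d hd'

lemma W_digits (n : ℕ) : ∀ d ∈ W n, 2 ≤ d := by
  intro d hd
  have := Mword_digits n d (List.mem_reverse.1 hd)
  omega

lemma W_digits3 (n : ℕ) : ∀ d ∈ W n, d ≤ 3 := by
  intro d hd
  have := Mword_digits n d (List.mem_reverse.1 hd)
  omega

/-! ### lengths -/

def pl (n : ℕ) : ℕ := (Mword n).length

lemma W_length (n : ℕ) : (W n).length = pl n := by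
  simp [W, pl]

lemma pl_one : pl 1 = 1 := rfl
lemma pl_two : pl 2 = 1 := rfl
lemma pl_rec (n : ℕ) : pl (n+3) = pl (n+2) + 2 * pl (n+1) := by
  simp [pl, Mword_rec]
  omega

lemma pl_three : pl 3 = 3 := rfl
lemma pl_four : pl 4 = 5 := rfl

lemma pl_pos : ∀ n, 1 ≤ n → 1 ≤ pl n := by
  intro n
  induction n using Nat.strong_induction_on with
  | _ n ih =>
    match n with
    | 0 => intro h; exact absurd h (by norm_num)
    | 1 => intro _; norm_num [pl_one]
    | 2 => intro _; norm_num [pl_two]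
    | (m+3) =>
      intro _
      have h1 := ih (m+2) (by omega)
      rw [pl_rec]
      omega

lemma pl_odd : ∀ n, 1 ≤ n → Odd (pl n) := by
  intro n
  induction n using Nat.strong_induction_on with
  | _ n ih =>
    match n with
    | 0 => intro h; exact absurd h (by norm_num)
    | 1 => intro _; norm_num [pl_one]
    | 2 => intro _; norm_num [pl_two]
    | (m+3) =>
      intro _
      have h1 := ih (m+2) (by omega) (by omega)
      rw [pl_rec]
      rcases h1 with ⟨t, ht⟩
      exact ⟨t + pl (m+1), by omega⟩

lemma pl_ge : ∀ n, 3 ≤ n → n ≤ pl n := by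
  intro n
  induction n using Nat.strong_induction_on with
  | _ n ih =>
    match n with
    | 0 => intro h; exact absurd h (by norm_num)
    | 1 => intro h; exact absurd h (by norm_num)
    | 2 => intro h; exact absurd h (by norm_num)
    | 3 => intro _; rw [pl_three]
    | 4 => intro _; rw [pl_four]; omega
    | (m+5) =>
      intro _
      have h1 : m + 4 ≤ pl (m+4) := ih (m+4) (by omega) (by omega)
      have h2 : 1 ≤ pl (m+3) := pl_pos (m+3) (by omega)
      have h3 : pl (m+5) = pl (m+4) + 2 * pl (m+3) := pl_rec (m+2)
      omega

/-! ### products -/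

noncomputable def Pr (n : ℕ) : ℝ := PP (W n)

lemma Pr_one : Pr 1 = 2 := by norm_num [Pr, W_one, PP_cons, PP_nil]
lemma Pr_two : Pr 2 = 3 := by norm_num [Pr, W_two, PP_cons, PP_nil]
lemma Pr_three : Pr 3 = 12 := by norm_num [Pr, W_three, PP_cons, PP_nil]
lemma Pr_four : Pr 4 = 108 := by norm_num [Pr, W_four, PP_cons, PP_nil]

lemma Pr_rec (n : ℕ) : Pr (n+3) = Pr (n+1)^2 * Pr (n+2) := by
  unfold Pr
  rw [W_rec, PP_append, PP_append]
  ring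

lemma Pr_ge_two : ∀ n, 1 ≤ n → 2 ≤ Pr n := by
  intro n
  induction n using Nat.strong_induction_on with
  | _ n ih =>
    match n with
    | 0 => intro h; exact absurd h (by norm_num)
    | 1 => intro _; rw [Pr_one]
    | 2 => intro _; norm_num [Pr_two]
    | (m+3) =>
      intro _
      have h1 := ih (m+1) (by omega) (by omega)
      have h2 := ih (m+2) (by omega) (by omega)
      rw [Pr_rec]
      nlinarith

lemma Pr_ge_three : ∀ n, 2 ≤ n → 3 ≤ Pr n := by
  intro n
  induction n using Nat.strong_induction_on with
  | _ n ih =>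
    match n with
    | 0 => intro h; exact absurd h (by norm_num)
    | 1 => intro h; exact absurd h (by norm_num)
    | 2 => intro _; norm_num [Pr_two]
    | (m+3) =>
      intro _
      have h1 := Pr_ge_two (m+1) (by omega)
      have h2 := Pr_ge_two (m+2) (by omega)
      rw [Pr_rec]
      nlinarith

lemma Pr_ge_twelve : ∀ n, 3 ≤ n → 12 ≤ Pr n := by
  intro n
  induction n using Nat.strong_induction_on with
  | _ n ih =>
    match n with
    | 0 => intro h; exact absurd h (by norm_num)
    | 1 => intro h; exact absurd h (by norm_num)
    | 2 => intro h; exact absurd h (by norm_num)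
    | 3 => intro _; norm_num [Pr_three]
    | (m+4) =>
      intro _
      have h1 := Pr_ge_two (m+2) (by omega)
      have h2 := Pr_ge_three (m+3) (by omega)
      rw [Pr_rec]
      nlinarith

lemma Pr_pos (n : ℕ) (hn : 1 ≤ n) : 0 < Pr n := lt_of_lt_of_le (by norm_num) (Pr_ge_two n hn)

/-! ### fixed point algebra -/

section WithLam

variable (lam : ℕ → ℝ) (hfix : ∀ n, 1 ≤ n → compList (Mword n) (lam n) = lam n)

include hfix

lemma fixW (n : ℕ) (hn : 1 ≤ n) : apL (W n) (lam n) = lam n := by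
  have h := hfix n hn
  rwa [compList_eq_apL] at h

omit hfix in
lemma neg_one_pl (n : ℕ) (hn : 1 ≤ n) : ((-1 : ℝ)) ^ (pl n) = -1 :=
  Odd.neg_one_pow (pl_odd n hn)

lemma apLW (n : ℕ) (hn : 1 ≤ n) (x : ℝ) :
    apL (W n) x = lam n - (x - lam n) / Pr n := by
  have h := apL_sub (W n) (W_digits n) x (lam n)
  rw [fixW lam hfix n hn, W_length, neg_one_pl n hn] at h
  have h2 : apL (W n) x - lam n = -((x - lam n)/PP (W n)) := by rw [h]; ring
  unfold Pr
  linarith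

lemma lam1 : lam 1 = 1/3 := by
  have h := fixW lam hfix 1 (by norm_num)
  rw [W_one] at h
  simp only [apL_cons, apL_nil, T] at h
  push_cast at h
  linarith

lemma lam2 : lam 2 = 1/4 := by
  have h := fixW lam hfix 2 (by norm_num)
  rw [W_two] at h
  simp only [apL_cons, apL_nil, T] at h
  push_cast at h
  linarith

lemma lam3 : lam 3 = 3/13 := by
  have h := fixW lam hfix 3 (by norm_num)
  rw [W_three] at h
  simp only [apL_cons, apL_nil, T] at h
  push_cast at h
  try norm_num at h
  linarith

lemma lam4 : lam 4 = 25/109 := by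
  have h := fixW lam hfix 4 (by norm_num)
  rw [W_four] at h
  simp only [apL_cons, apL_nil, T] at h
  push_cast at h
  try norm_num at h
  linarith

lemma lam5 : lam 5 = 3567/15553 := by
  have h := fixW lam hfix 5 (by norm_num)
  rw [W_five] at h
  simp only [apL_cons, apL_nil, T] at h
  push_cast at h
  try norm_num at h
  linarith

end WithLam

/-- gap sequence -/
noncomputable def Dl (lam : ℕ → ℝ) (k : ℕ) : ℝ := lam k - lam (k+1)

section WithLam2

variable (lam : ℕ → ℝ) (hfix : ∀ n, 1 ≤ n → compList (Mword n) (lam n) = lam n)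

include hfix

lemma DRec (j : ℕ) :
    Dl lam (j+2) * (Pr (j+1)^2 * Pr (j+2) + 1) = Dl lam (j+1) * (Pr (j+1)^2 - 1) := by
  have h3 := fixW lam hfix (j+3) (by omega)
  rw [W_rec, apL_append, apL_append] at h3
  rw [apLW lam hfix (j+1) (by omega), apLW lam hfix (j+1) (by omega),
      apLW lam hfix (j+2) (by omega)] at h3
  have hp := Pr_pos (j+1) (by omega)
  have hq := Pr_pos (j+2) (by omega)
  unfold Dl
  field_simp at h3
  nlinarith [h3, sq_nonneg (Pr (j+1))]

end WithLam2

end Pf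
namespace Pf

section Chain

variable (lam : ℕ → ℝ) (hfix : ∀ n, 1 ≤ n → compList (Mword n) (lam n) = lam n)

include hfix

lemma Dl_one : Dl lam 1 = 1/12 := by
  unfold Dl; rw [lam1 lam hfix, lam2 lam hfix]; norm_num

lemma Dl_two : Dl lam 2 = 1/52 := by
  unfold Dl; rw [lam2 lam hfix, lam3 lam hfix]; norm_num

lemma Dl_three : Dl lam 3 = 2/1417 := by
  unfold Dl; rw [lam3 lam hfix, lam4 lam hfix]; norm_num

lemma Dl_four : Dl lam 4 = 22/1695277 := by
  unfold Dl; rw [lam4 lam hfix, lam5 lam hfix]; norm_num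

lemma Dl_pos : ∀ k, 1 ≤ k → 0 < Dl lam k := by
  intro k
  induction k using Nat.strong_induction_on with
  | _ k ih =>
    match k with
    | 0 => intro h; exact absurd h (by norm_num)
    | 1 => intro _; rw [Dl_one lam hfix]; norm_num
    | (j+2) =>
      intro _
      have h1 : 0 < Dl lam (j+1) := ih (j+1) (by omega) (by omega)
      have hrec := DRec lam hfix j
      have hp := Pr_ge_two (j+1) (by omega)
      have hq := Pr_ge_two (j+2) (by omega)
      have hfac : 0 < Pr (j+1)^2 * Pr (j+2) + 1 := by nlinarith
      have hfac2 : 0 < Pr (j+1)^2 - 1 := by nlinarith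
      nlinarith

lemma Dl_half : ∀ k, 1 ≤ k → Dl lam (k+1) ≤ Dl lam k / 2 := by
  intro k hk
  obtain ⟨j, rfl⟩ : ∃ j, k = j + 1 := ⟨k - 1, by omega⟩
  have hrec := DRec lam hfix j
  have hp := Pr_ge_two (j+1) (by omega)
  have hq := Pr_ge_two (j+2) (by omega)
  have h1 : 0 < Dl lam (j+1) := Dl_pos lam hfix (j+1) (by omega)
  have h2 : 0 < Dl lam (j+2) := Dl_pos lam hfix (j+2) (by omega)
  show Dl lam (j+2) ≤ Dl lam (j+1) / 2
  have hfacpos : (0:ℝ) < Pr (j+1)^2 * Pr (j+2) + 1 := by nlinarith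
  have hfac2 : Pr (j+1)^2 - 1 ≤ (Pr (j+1)^2 * Pr (j+2) + 1) / 2 := by
    nlinarith [mul_nonneg (sq_nonneg (Pr (j+1))) (sub_nonneg.2 hq)]
  have step : Dl lam (j+2) * (Pr (j+1)^2 * Pr (j+2) + 1)
      ≤ (Dl lam (j+1) / 2) * (Pr (j+1)^2 * Pr (j+2) + 1) := by
    rw [hrec]
    calc Dl lam (j+1) * (Pr (j+1)^2 - 1)
        ≤ Dl lam (j+1) * ((Pr (j+1)^2 * Pr (j+2) + 1) / 2) :=
          mul_le_mul_of_nonneg_left hfac2 h1.le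
      _ = (Dl lam (j+1) / 2) * (Pr (j+1)^2 * Pr (j+2) + 1) := by ring
  exact le_of_mul_le_mul_right step hfacpos

lemma lam_lt (k : ℕ) (hk : 1 ≤ k) : lam (k+1) < lam k := by
  have := Dl_pos lam hfix k hk
  unfold Dl at this; linarith

lemma lam_mono : ∀ k, 1 ≤ k → ∀ i, lam (k+i) ≤ lam k := by
  intro k hk i
  induction i with
  | zero => simp
  | succ i ih =>
      have := lam_lt lam hfix (k+i) (by omega)
      have h2 : k + (i+1) = (k+i) + 1 := by omega
      rw [h2]; linarith

lemma lam_tail : ∀ k, 1 ≤ k → ∀ i, lam k - lam (k+i) ≤ 2 * Dl lam k - 2 * Dl lam (k+i) := by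
  intro k hk i
  induction i with
  | zero => simp
  | succ i ih =>
      have hh : Dl lam (k+i+1) ≤ Dl lam (k+i) / 2 := Dl_half lam hfix (k+i) (by omega)
      have hd : lam (k+i) - lam (k+i+1) = Dl lam (k+i) := rfl
      have h2 : k + (i+1) = (k+i) + 1 := by omega
      rw [h2]
      linarith

lemma lam_ge_sub (k : ℕ) (hk : 1 ≤ k) (m : ℕ) (hm : k ≤ m) :
    lam k - 2 * Dl lam k ≤ lam m := by
  obtain ⟨i, rfl⟩ : ∃ i, m = k + i := ⟨m - k, by omega⟩
  have h1 := lam_tail lam hfix k hk i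
  have h2 : 0 < Dl lam (k+i) := Dl_pos lam hfix (k+i) (by omega)
  linarith

/-- uniform rational lower bound for all `lam n`, `n ≥ 1` -/
lemma lamLB : ∀ n, 1 ≤ n → (388781/1695277 : ℝ) ≤ lam n := by
  intro n hn
  rcases le_or_gt 4 n with h | h
  · have h1 := lam_ge_sub lam hfix 4 (by norm_num) n h
    rw [lam4 lam hfix, Dl_four lam hfix] at h1
    norm_num at h1 ⊢
    linarith
  · interval_cases n
    · rw [lam1 lam hfix]; norm_num
    · rw [lam2 lam hfix]; norm_num
    · rw [lam3 lam hfix]; norm_num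

lemma lam_le_third (n : ℕ) (hn : 1 ≤ n) : lam n ≤ 1/3 := by
  obtain ⟨i, rfl⟩ : ∃ i, n = 1 + i := ⟨n - 1, by omega⟩
  have := lam_mono lam hfix 1 (by norm_num) i
  rw [lam1 lam hfix] at this
  exact this

end Chain

end Pf
namespace Pf

/-! ### the infinite word and lam0 -/

def Mpre (k : ℕ) : List ℕ := (List.range k).map Minf

lemma Mpre_length (k : ℕ) : (Mpre k).length = k := by simp [Mpre]

lemma Minf_lt_len (t : ℕ) : t < (Mword (t+3)).length := by
  have := pl_ge (t+3) (by omega)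
  unfold pl at this
  omega

lemma Minf_digits (t : ℕ) : Minf t = 2 ∨ Minf t = 3 := by
  unfold Minf
  rw [List.getD_eq_getElem _ _ (Minf_lt_len t)]
  exact Mword_digits (t+3) _ (List.getElem_mem _)

lemma Mpre_digits (k : ℕ) : ∀ d ∈ Mpre k, 2 ≤ d := by
  intro d hd
  simp only [Mpre, List.mem_map] at hd
  obtain ⟨t, _, rfl⟩ := hd
  rcases Minf_digits t with h | h <;> omega

lemma Mword_prefix (m : ℕ) : Mword (m+2) <+: Mword (m+3) := by
  refine ⟨Mword (m+1) ++ Mword (m+1), ?_⟩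
  rw [Mword_rec]
  simp [List.append_assoc]

lemma Mword_prefix_le : ∀ a b, 2 ≤ a → a ≤ b → Mword a <+: Mword b := by
  intro a b ha hab
  induction b, hab using Nat.le_induction with
  | base => exact List.prefix_refl _
  | succ b hb ih =>
      have hb2 : 2 ≤ b := by omega
      obtain ⟨m, rfl⟩ : ∃ m, b = m + 2 := ⟨b - 2, by omega⟩
      exact ih.trans (Mword_prefix m)

lemma Mword_getD_stable (a b t : ℕ) (ha : 2 ≤ a) (hab : a ≤ b)
    (ht : t < (Mword a).length) :
    (Mword a).getD t 0 = (Mword b).getD t 0 := by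
  obtain ⟨u, hu⟩ := Mword_prefix_le a b ha hab
  rw [← hu]
  rw [List.getD_eq_getElem _ _ ht]
  have ht2 : t < (Mword a ++ u).length := by
    rw [List.length_append]; omega
  rw [List.getD_eq_getElem _ _ ht2]
  rw [List.getElem_append_left ht]

lemma Minf_eq_getD (n t : ℕ) (hn : 2 ≤ n) (ht : t < pl n) :
    Minf t = (Mword n).getD t 0 := by
  unfold Minf
  rcases le_or_gt (t+3) n with h | h
  · exact Mword_getD_stable (t+3) n t (by omega) h (Minf_lt_len t)
  · exact (Mword_getD_stable n (t+3) t hn (by omega) ht).symm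

lemma Mpre_eq (n : ℕ) (hn : 2 ≤ n) : Mpre (pl n) = Mword n := by
  apply List.ext_getElem
  · rw [Mpre_length]; rfl
  · intro i h1 h2
    have hi : i < pl n := by rwa [Mpre_length] at h1
    have : (Mpre (pl n))[i] = Minf i := by
      simp [Mpre]
    rw [this, Minf_eq_getD n i hn hi, List.getD_eq_getElem _ _ h2]

/-! ### the series -/

noncomputable def sa (l : ℕ) : ℝ := (-1 : ℝ) ^ l / ∏ t ∈ Finset.range (l + 1), (Minf t : ℝ)

lemma lam0_eq_tsum : lam0 = ∑' l, sa l := rfl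

lemma Qp_eq (l : ℕ) : (∏ t ∈ Finset.range (l + 1), (Minf t : ℝ)) = PP (Mpre (l+1)) := by
  induction l with
  | zero =>
      simp [Mpre, PP, List.range_succ]
  | succ l ih =>
      rw [Finset.prod_range_succ, ih]
      have : Mpre (l+2) = Mpre (l+1) ++ [Minf (l+1)] := by
        unfold Mpre
        rw [List.range_succ, List.map_append]
        rfl
      rw [this, PP_append, PP_cons, PP_nil]
      ring

lemma Qp_ge (l : ℕ) : (2:ℝ)^(l+1) ≤ ∏ t ∈ Finset.range (l + 1), (Minf t : ℝ) := by
  rw [Qp_eq]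
  have := PP_ge_pow (Mpre (l+1)) (Mpre_digits (l+1))
  rwa [Mpre_length] at this

lemma Qp_pos (l : ℕ) : (0:ℝ) < ∏ t ∈ Finset.range (l + 1), (Minf t : ℝ) := by
  have := Qp_ge l
  have h2 : (0:ℝ) < 2^(l+1) := by positivity
  linarith

lemma sa_abs (l : ℕ) : |sa l| ≤ (1/2:ℝ)^l := by
  unfold sa
  rw [abs_div, abs_pow, abs_neg, abs_one, one_pow]
  rw [abs_of_pos (Qp_pos l)]
  rw [div_le_iff₀ (Qp_pos l)]
  have h1 := Qp_ge l
  have h2 : (0:ℝ) < (1/2)^l := by positivity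
  have hone : (1/2:ℝ)^l * 2^l = 1 := by
    rw [← mul_pow]; norm_num
  calc (1:ℝ) = (1/2)^l * 2^l := hone.symm
    _ ≤ (1/2)^l * ∏ t ∈ Finset.range (l + 1), (Minf t : ℝ) := by
        apply mul_le_mul_of_nonneg_left _ h2.le
        calc (2:ℝ)^l ≤ 2^(l+1) := by
              apply pow_le_pow_right₀ (by norm_num); omega
          _ ≤ _ := h1

lemma sa_summable : Summable sa := by
  apply Summable.of_norm
  apply Summable.of_nonneg_of_le (fun l => norm_nonneg _) (fun l => ?_)
    (summable_geometric_of_lt_one (by norm_num : (0:ℝ) ≤ 1/2) (by norm_num))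
  rw [Real.norm_eq_abs]
  exact sa_abs l

lemma S_tendsto : Filter.Tendsto (fun k => ∑ l ∈ Finset.range k, sa l)
    Filter.atTop (nhds lam0) := by
  rw [lam0_eq_tsum]
  exact sa_summable.hasSum.tendsto_sum_nat

lemma compList_sub (l : List ℕ) (hl : ∀ d ∈ l, 2 ≤ d) (x y : ℝ) :
    compList l x - compList l y = (-1) ^ l.length * (x - y) / PP l := by
  rw [compList_eq_apL, compList_eq_apL]
  have h := apL_sub l.reverse (fun d hd => hl d (List.mem_reverse.1 hd)) x y
  rwa [List.length_reverse, PP_reverse] at h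

lemma S_eq (k : ℕ) : ∑ l ∈ Finset.range k, sa l = compList (Mpre k) 0 := by
  induction k with
  | zero => simp [Mpre, compList]
  | succ k ih =>
      rw [Finset.sum_range_succ, ih]
      have hsplit : Mpre (k+1) = Mpre k ++ [Minf k] := by
        unfold Mpre
        rw [List.range_succ, List.map_append]
        rfl
      have happ : compList (Mpre (k+1)) 0 = compList (Mpre k) (T (Minf k) 0) := by
        rw [hsplit]
        unfold compList
        rw [List.foldr_append]
        rfl
      rw [happ]
      have hknz : (0:ℝ) < (Minf k : ℝ) := by
        rcases Minf_digits k with h | h <;> rw [h] <;> norm_num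
      have hsub := compList_sub (Mpre k) (Mpre_digits k) (T (Minf k) 0) 0
      rw [Mpre_length] at hsub
      have hT : T (Minf k) 0 - 0 = 1 / (Minf k : ℝ) := by
        unfold T; ring
      rw [hT] at hsub
      have : compList (Mpre k) (T (Minf k) 0) = compList (Mpre k) 0
          + (-1)^k * (1 / (Minf k:ℝ)) / PP (Mpre k) := by linarith
      rw [this]
      congr 1
      unfold sa
      rw [Qp_eq]
      have hsplit2 : PP (Mpre (k+1)) = PP (Mpre k) * (Minf k : ℝ) := by
        rw [hsplit, PP_append, PP_cons, PP_nil]; ring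
      rw [hsplit2]
      have hPP : (0:ℝ) < PP (Mpre k) := PP_pos _ (Mpre_digits k)
      field_simp

end Pf
namespace Pf

section Limit

variable (lam : ℕ → ℝ) (hfix : ∀ n, 1 ≤ n → compList (Mword n) (lam n) = lam n)

include hfix

lemma lam_pos (n : ℕ) (hn : 1 ≤ n) : 0 < lam n :=
  lt_of_lt_of_le (by norm_num) (lamLB lam hfix n hn)

omit hfix in
lemma Mword_digits2 (n : ℕ) : ∀ d ∈ Mword n, 2 ≤ d := by
  intro d hd; rcases Mword_digits n d hd with h | h <;> omega

lemma lam_vs_S (n : ℕ) (hn : 2 ≤ n) :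
    |lam n - ∑ l ∈ Finset.range (pl n), sa l| ≤ (1/2:ℝ)^(pl n) := by
  rw [S_eq, Mpre_eq n hn]
  have h := compList_sub (Mword n) (Mword_digits2 n) (lam n) 0
  rw [hfix n (by omega)] at h
  have hlen : (Mword n).length = pl n := rfl
  rw [hlen] at h
  have hPP : (2:ℝ)^(pl n) ≤ PP (Mword n) := by
    have := PP_ge_pow (Mword n) (Mword_digits2 n)
    rwa [hlen] at this
  have hPPpos : (0:ℝ) < PP (Mword n) := by
    have : (0:ℝ) < 2^(pl n) := by positivity
    linarith
  have habs : |(-1:ℝ) ^ (pl n) * (lam n - 0) / PP (Mword n)| = lam n / PP (Mword n) := by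
    rw [abs_div, abs_mul, abs_pow, abs_neg, abs_one, one_pow, one_mul, sub_zero,
        abs_of_pos (lam_pos lam hfix n (by omega)), abs_of_pos hPPpos]
  rw [h, habs]
  have h1 : lam n ≤ 1 := le_trans (lam_le_third lam hfix n (by omega)) (by norm_num)
  have h2 : lam n / PP (Mword n) ≤ 1 / 2^(pl n) :=
    div_le_div₀ (by norm_num) h1 (by positivity) hPP
  calc lam n / PP (Mword n) ≤ 1 / 2^(pl n) := h2
    _ = (1/2:ℝ)^(pl n) := by rw [div_pow, one_pow]

lemma lam_tendsto : Filter.Tendsto (fun n => lam n) Filter.atTop (nhds lam0) := by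
  rw [Metric.tendsto_atTop]
  intro ε hε
  have hS := S_tendsto
  rw [Metric.tendsto_atTop] at hS
  obtain ⟨N₁, hN₁⟩ := hS (ε/2) (by linarith)
  obtain ⟨N₂, hN₂⟩ : ∃ N : ℕ, (1/2:ℝ)^N < ε/2 :=
    exists_pow_lt_of_lt_one (by linarith) (by norm_num)
  refine ⟨max (max N₁ N₂) 3, fun n hn => ?_⟩
  have hn1 : N₁ ≤ n := le_trans (le_max_left _ _) (le_trans (le_max_left _ _) hn)
  have hn2 : N₂ ≤ n := le_trans (le_max_right _ _) (le_trans (le_max_left _ _) hn)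
  have hn3 : 3 ≤ n := le_trans (le_max_right _ _) hn
  have hpl : n ≤ pl n := pl_ge n hn3
  have hA := lam_vs_S lam hfix n (by omega)
  have hB := hN₁ (pl n) (by omega)
  have hC : (1/2:ℝ)^(pl n) ≤ (1/2:ℝ)^N₂ :=
    pow_le_pow_of_le_one (by norm_num) (by norm_num) (by omega)
  rw [Real.dist_eq] at hB ⊢
  have : |lam n - lam0| ≤ |lam n - ∑ l ∈ Finset.range (pl n), sa l|
      + |(∑ l ∈ Finset.range (pl n), sa l) - lam0| := by
    have := abs_sub_abs_le_abs_sub (lam n) lam0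
    calc |lam n - lam0| = |(lam n - ∑ l ∈ Finset.range (pl n), sa l)
          + ((∑ l ∈ Finset.range (pl n), sa l) - lam0)| := by ring_nf
      _ ≤ _ := abs_add_le _ _
  linarith

lemma lam0_le (n : ℕ) (hn : 1 ≤ n) : lam0 ≤ lam n := by
  apply le_of_tendsto (lam_tendsto lam hfix)
  rw [Filter.eventually_atTop]
  refine ⟨n, fun m hm => ?_⟩
  obtain ⟨i, rfl⟩ : ∃ i, m = n + i := ⟨m - n, by omega⟩
  exact lam_mono lam hfix n hn i

lemma lam0_lt (n : ℕ) (hn : 1 ≤ n) : lam0 < lam n :=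
  lt_of_le_of_lt (lam0_le lam hfix (n+1) (by omega)) (lam_lt lam hfix n hn)

end Limit

end Pf
namespace Pf

noncomputable def cyc (lam : ℕ → ℝ) (k j : ℕ) : ℝ := apL ((W k).take j) (lam k)

section Cyc

variable (lam : ℕ → ℝ) (hfix : ∀ n, 1 ≤ n → compList (Mword n) (lam n) = lam n)

lemma cyc_zero (k : ℕ) : cyc lam k 0 = lam k := rfl

include hfix

lemma cyc_full (k : ℕ) (hk : 1 ≤ k) : cyc lam k (pl k) = lam k := by
  unfold cyc
  rw [← W_length, List.take_length]
  exact fixW lam hfix k hk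

omit hfix in
lemma take_digits (k j : ℕ) : ∀ d ∈ (W k).take j, 2 ≤ d :=
  fun d hd => W_digits k d (List.mem_of_mem_take hd)

omit hfix in
lemma take_length_eq (k j : ℕ) (hj : j ≤ pl k) : ((W k).take j).length = j := by
  rw [List.length_take, W_length]
  omega

omit hfix in
lemma PP_take_ge_one (k j : ℕ) : 1 ≤ PP ((W k).take j) :=
  PP_ge_one _ (take_digits k j)

omit hfix in
lemma PP_take_ge_two (k j : ℕ) (h1 : 1 ≤ j) (hj : j ≤ pl k) : 2 ≤ PP ((W k).take j) := by
  have h := PP_ge_pow _ (take_digits k j)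
  rw [take_length_eq k j hj] at h
  have h2 : (2:ℝ) = 2^1 := by norm_num
  calc (2:ℝ) = 2^1 := h2
    _ ≤ 2^j := pow_le_pow_right₀ (by norm_num) h1
    _ ≤ _ := h

omit hfix in
lemma cyc_sub (k j : ℕ) (hj : j ≤ pl k) (x : ℝ) :
    apL ((W k).take j) x = cyc lam k j + (-1)^j * (x - lam k) / PP ((W k).take j) := by
  have h := apL_sub ((W k).take j) (take_digits k j) x (lam k)
  rw [take_length_eq k j hj] at h
  unfold cyc
  linarith

omit hfix in
lemma corr_lb (j : ℕ) (e P s : ℝ) (hP : 2 ≤ P) (hs : |e| ≤ s) :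
    -(s/2) ≤ (-1)^j * e / P := by
  have hs0 : 0 ≤ s := le_trans (abs_nonneg e) hs
  have hPpos : (0:ℝ) < P := by linarith
  have habs : |(-1)^j * e / P| ≤ s / 2 := by
    rw [abs_div, abs_mul, abs_pow, abs_neg, abs_one, one_pow, one_mul,
        abs_of_pos hPpos]
    exact div_le_div₀ hs0 hs (by norm_num) hP
  have := neg_abs_le ((-1)^j * e / P)
  linarith

/-- The main cycle-minimality statement, by strong induction. -/
lemma cyc_main : ∀ k, (1 ≤ k → ∀ j, j ≤ pl k → lam k ≤ cyc lam k j) ∧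
    (∀ m, k = m + 3 → ∀ j, 1 ≤ j → j < pl (m+3) →
      lam (m+3) + (lam (m+1) - lam (m+3))/2 ≤ cyc lam (m+3) j) := by
  intro k
  induction k using Nat.strong_induction_on with
  | _ k ih =>
    have main : ∀ m, k = m + 3 → ∀ j, 1 ≤ j → j < pl (m+3) →
        lam (m+3) + (lam (m+1) - lam (m+3))/2 ≤ cyc lam (m+3) j := by
      rintro m rfl j hj1 hj2
      have hq : (W (m+1)).length = pl (m+1) := W_length (m+1)
      have hWr : W (m+3) = W (m+1) ++ W (m+1) ++ W (m+2) := W_rec m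
      have hD1 : 0 < Dl lam (m+1) := Dl_pos lam hfix (m+1) (by omega)
      have hD2 : 0 < Dl lam (m+2) := Dl_pos lam hfix (m+2) (by omega)
      have hDhalf : Dl lam (m+2) ≤ Dl lam (m+1)/2 := Dl_half lam hfix (m+1) (by omega)
      have hDeq : lam (m+1) - lam (m+3) = Dl lam (m+1) + Dl lam (m+2) := by
        unfold Dl; ring
      have hDpos : 0 < lam (m+1) - lam (m+3) := by rw [hDeq]; linarith
      have hDle : lam (m+1) - lam (m+3) ≤ (3/2) * Dl lam (m+1) := by
        rw [hDeq]; linarith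
      set D := lam (m+1) - lam (m+3) with hDdef
      clear_value D
      have hP := Pr_ge_two (m+1) (by omega)
      have hPpos : (0:ℝ) < Pr (m+1) := by linarith
      have hLw1 : ∀ i, i ≤ pl (m+1) → lam (m+1) ≤ cyc lam (m+1) i :=
        fun i hi => (ih (m+1) (by omega)).1 (by omega) i hi
      have hpl3 : pl (m+3) = pl (m+2) + 2 * pl (m+1) := pl_rec m
      rcases lt_or_ge j (pl (m+1)) with hseg | hge1
      · -- segment 1 : j < pl (m+1)
        have htake : (W (m+3)).take j = (W (m+1)).take j := by
          rw [hWr, List.take_append_of_le_length, List.take_append_of_le_length]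
          · rw [hq]; omega
          · rw [List.length_append, hq]; omega
        have hcv : cyc lam (m+3) j = cyc lam (m+1) j
            + (-1)^j * (lam (m+3) - lam (m+1)) / PP ((W (m+1)).take j) := by
          unfold cyc
          rw [htake]
          exact cyc_sub lam (m+1) j (by omega) (lam (m+3))
        have hLw := hLw1 j (by omega)
        have hPP2 := PP_take_ge_two (m+1) j hj1 (by omega)
        have hcorr := corr_lb j (lam (m+3) - lam (m+1)) _ D hPP2
          (by rw [abs_of_neg (by linarith)]; linarith)
        rw [hcv]
        linarith
      · rcases lt_or_ge j (2 * pl (m+1)) with hseg2 | hge2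
        · -- segment 2 : j = pl (m+1) + i, i < pl (m+1)
          obtain ⟨i, rfl⟩ : ∃ i, j = pl (m+1) + i := ⟨j - pl (m+1), by omega⟩
          have hi : i < pl (m+1) := by omega
          have htake : (W (m+3)).take (pl (m+1) + i)
              = W (m+1) ++ (W (m+1)).take i := by
            rw [hWr, List.take_append_of_le_length
              (by rw [List.length_append, hq]; omega)]
            rw [List.take_append,
                List.take_of_length_le (by rw [hq]; omega)]
            have hidx : pl (m+1) + i - (W (m+1)).length = i := by rw [hq]; omega
            rw [hidx]
          have hy : apL (W (m+1)) (lam (m+3)) = lam (m+1) + D/Pr (m+1) := by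
            rw [apLW lam hfix (m+1) (by omega)]
            rw [hDdef]
            ring
          have hcv : cyc lam (m+3) (pl (m+1) + i) = cyc lam (m+1) i
              + (-1)^i * (D/Pr (m+1)) / PP ((W (m+1)).take i) := by
            show apL ((W (m+3)).take (pl (m+1) + i)) (lam (m+3)) = _
            rw [htake, apL_append, hy, cyc_sub lam (m+1) i (by omega)]
            ring_nf
          rcases Nat.eq_zero_or_pos i with rfl | hipos
          · -- i = 0
            have hcy : cyc lam (m+3) (pl (m+1) + 0) = lam (m+1) + D/Pr (m+1) := by
              show apL ((W (m+3)).take (pl (m+1) + 0)) (lam (m+3)) = _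
              rw [htake]
              simp only [List.take_zero, List.append_nil]
              exact hy
            rw [hcy]
            have : 0 < D/Pr (m+1) := div_pos hDpos hPpos
            linarith
          · have hPP2 := PP_take_ge_two (m+1) i hipos (by omega)
            have hLw := hLw1 i (by omega)
            have heD : |D/Pr (m+1)| ≤ D/2 := by
              rw [abs_of_pos (div_pos hDpos hPpos)]
              exact div_le_div₀ (by linarith) (le_refl D) (by norm_num) hP
            have hcorr := corr_lb i (D/Pr (m+1)) _ (D/2) hPP2 heD
            rw [hcv]
            linarith
        · -- segment 3 : j = 2*pl(m+1) + i, i < pl (m+2)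
          obtain ⟨i, rfl⟩ : ∃ i, j = 2*pl (m+1) + i := ⟨j - 2*pl (m+1), by omega⟩
          have hi : i < pl (m+2) := by omega
          have hlenAA : (W (m+1) ++ W (m+1)).length = 2 * pl (m+1) := by
            rw [List.length_append, hq]; omega
          have htake : (W (m+3)).take (2*pl (m+1) + i)
              = (W (m+1) ++ W (m+1)) ++ (W (m+2)).take i := by
            rw [hWr, List.take_append,
                List.take_of_length_le (by rw [hlenAA]; omega)]
            have hidx : 2*pl (m+1) + i - (W (m+1) ++ W (m+1)).length = i := by
              rw [hlenAA]; omega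
            rw [hidx]
          have hz : apL (W (m+1) ++ W (m+1)) (lam (m+3))
              = lam (m+1) - D/(Pr (m+1) * Pr (m+1)) := by
            rw [apL_append, apLW lam hfix (m+1) (by omega),
                apLW lam hfix (m+1) (by omega), hDdef]
            field_simp
            ring
          set z := lam (m+1) - D/(Pr (m+1) * Pr (m+1)) with hzdef
          clear_value z
          have hDP2 : D/(Pr (m+1) * Pr (m+1)) ≤ (3/8) * Dl lam (m+1) := by
            have h4 : (4:ℝ) ≤ Pr (m+1) * Pr (m+1) := by nlinarith
            calc D/(Pr (m+1) * Pr (m+1)) ≤ D/4 :=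
              div_le_div₀ (by linarith) (le_refl D) (by norm_num) h4
              _ ≤ (3/8) * Dl lam (m+1) := by linarith
          have hDP2pos : 0 < D/(Pr (m+1) * Pr (m+1)) := by positivity
          have hze : z - lam (m+2) = Dl lam (m+1) - D/(Pr (m+1) * Pr (m+1)) := by
            rw [hzdef]; unfold Dl; ring
          have hzlb : (5/8) * Dl lam (m+1) ≤ z - lam (m+2) := by
            rw [hze]; linarith
          have hzub : z - lam (m+2) ≤ Dl lam (m+1) := by
            rw [hze]; linarith
          have hcv : cyc lam (m+3) (2*pl (m+1) + i) = cyc lam (m+2) i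
              + (-1)^i * (z - lam (m+2)) / PP ((W (m+2)).take i) := by
            show apL ((W (m+3)).take (2*pl (m+1) + i)) (lam (m+3)) = _
            rw [htake, apL_append, hz]
            exact cyc_sub lam (m+2) i (by omega) z
          rcases Nat.eq_zero_or_pos i with rfl | hipos
          · -- i = 0
            have hc0 : cyc lam (m+3) (2*pl (m+1) + 0) = z := by
              rw [hcv, cyc_zero]
              simp only [List.take_zero, PP_nil, pow_zero]
              ring
            rw [hc0]
            have hdl : lam (m+2) - lam (m+3) = Dl lam (m+2) := rfl
            linarith
          · -- i ≥ 1 : here pl (m+2) ≥ 2 forces m ≥ 1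
            have hm1 : 1 ≤ m := by
              by_contra hm
              have hm0 : m = 0 := by omega
              subst hm0
              have h2 : pl (0+2) = 1 := pl_two
              omega
            obtain ⟨m', hm'⟩ : ∃ m', m = m' + 1 := ⟨m - 1, by omega⟩
            have e3 : m' + 3 = m + 2 := by omega
            have e1 : m' + 1 = m := by omega
            have hGs : lam (m+2) + (lam m - lam (m+2))/2 ≤ cyc lam (m+2) i := by
              have h := (ih (m+2) (by omega)).2 m' (by omega) i hipos
                (by rw [e3]; omega)
              rw [e3, e1] at h
              exact h
            have hDm : 0 < Dl lam m := Dl_pos lam hfix m (by omega)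
            have hDmhalf : Dl lam (m+1) ≤ Dl lam m/2 :=
              Dl_half lam hfix m (by omega)
            have hgam : lam m - lam (m+2) = Dl lam m + Dl lam (m+1) := by
              unfold Dl; ring
            have hPP2 := PP_take_ge_two (m+2) i hipos (by omega)
            have hcorr := corr_lb i (z - lam (m+2)) _ (Dl lam (m+1)) hPP2
              (by
                rw [abs_of_nonneg (by linarith [hzlb] : (0:ℝ) ≤ z - lam (m+2))]
                exact hzub)
            rw [hcv]
            have hdl2 : lam (m+2) - lam (m+3) = Dl lam (m+2) := rfl
            linarith
      -- end segments
    constructor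
    · intro hk j hj
      rcases eq_or_lt_of_le hj with rfl | hjlt
      · rw [cyc_full lam hfix k hk]
      · rcases Nat.eq_zero_or_pos j with rfl | hjpos
        · rw [cyc_zero]
        · rcases lt_or_ge k 3 with hk3 | hk3
          · exfalso
            interval_cases k
            · have : pl 1 = 1 := pl_one
              omega
            · have : pl 2 = 1 := pl_two
              omega
          · obtain ⟨m, rfl⟩ : ∃ m, k = m + 3 := ⟨k - 3, by omega⟩
            have h := main m rfl j hjpos hjlt
            have hmono : lam (m+3) ≤ lam (m+1) := by
              have := lam_mono lam hfix (m+1) (by omega) 2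
              exact this
            linarith
    · exact main

-- convenient corollaries
lemma cyc_ge (k : ℕ) (hk : 1 ≤ k) (j : ℕ) (hj : j ≤ pl k) : lam k ≤ cyc lam k j :=
  (cyc_main lam hfix k).1 hk j hj

end Cyc

end Pf
namespace Pf

/-! ### orbit windows -/

def win (m : ℕ → ℕ) (s t : ℕ) : List ℕ := (List.range t).map (fun i => m (s + i))

lemma win_length (m : ℕ → ℕ) (s t : ℕ) : (win m s t).length = t := by simp [win]

lemma win_succ (m : ℕ → ℕ) (s t : ℕ) :
    win m s (t+1) = win m s t ++ [m (s + t)] := by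
  unfold win
  rw [List.range_succ, List.map_append]
  rfl

lemma orb_win (m : ℕ → ℕ) (s t : ℕ) :
    orb m (s + t) = apL (win m s t) (orb m s) := by
  induction t with
  | zero => simp [win]
  | succ t ih =>
      have h1 : orb m (s + (t+1)) = T (m (s+t)) (orb m (s+t)) := rfl
      rw [h1, ih, win_succ, apL_append]
      rfl

lemma win_append (m : ℕ → ℕ) (s a b : ℕ) :
    win m s (a + b) = win m s a ++ win m (s + a) b := by
  induction b with
  | zero => simp [win]
  | succ b ih =>
      have h1 : win m s (a + (b+1)) = win m s (a+b) ++ [m (s + (a+b))] := win_succ m s (a+b)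
      rw [h1, ih, win_succ, List.append_assoc]
      have : s + a + b = s + (a + b) := by omega
      rw [this]

lemma win_take (m : ℕ → ℕ) (s t r : ℕ) (h : r ≤ t) :
    win m s r = (win m s t).take r := by
  obtain ⟨i, rfl⟩ : ∃ i, t = r + i := ⟨t - r, by omega⟩
  rw [win_append, List.take_append_of_le_length (by rw [win_length]),
      List.take_of_length_le (by rw [win_length])]

lemma win_congr (m : ℕ → ℕ) (l : List ℕ) (s : ℕ)
    (h : ∀ q, q < l.length → m (s + q) = l.getD q 2) :
    win m s l.length = l := by
  apply List.ext_getElem (by rw [win_length])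
  intro i h1 h2
  have hi : i < l.length := h2
  have : (win m s l.length)[i] = m (s + i) := by
    simp [win]
  rw [this, h i hi, List.getD_eq_getElem _ _ hi]

/-! ### orbit bounds -/

lemma orb_mem (m : ℕ → ℕ) (hm : ∀ i, 2 ≤ m i) (t : ℕ) :
    0 ≤ orb m t ∧ orb m t ≤ 1/2 := by
  induction t with
  | zero => norm_num [orb]
  | succ t ih =>
      have hd : (2:ℝ) ≤ (m t : ℝ) := by exact_mod_cast hm t
      have hdpos : (0:ℝ) < (m t : ℝ) := by linarith
      constructor
      · show 0 ≤ T (m t) (orb m t)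
        unfold T
        apply div_nonneg (by linarith [ih.2]) hdpos.le
      · show T (m t) (orb m t) ≤ 1/2
        unfold T
        rw [div_le_iff₀ hdpos]
        nlinarith [ih.1]

/-! ### liminf helper -/

lemma liminf_eq_of (u : ℕ → ℝ) (A : ℝ)
    (hb : ∀ t, 0 ≤ u t) (hub : ∀ t, u t ≤ 1/2)
    (h1 : ∀ ε : ℝ, 0 < ε → ∀ᶠ t in Filter.atTop, A - ε ≤ u t)
    (h2 : ∀ ε : ℝ, 0 < ε → ∃ᶠ t in Filter.atTop, u t ≤ A + ε) :
    Filter.atTop.liminf u = A := by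
  have hbdd : Filter.IsBoundedUnder (· ≥ ·) Filter.atTop u :=
    Filter.isBoundedUnder_of ⟨0, fun t => hb t⟩
  have hbddup : Filter.IsBoundedUnder (· ≤ ·) Filter.atTop u :=
    Filter.isBoundedUnder_of ⟨1/2, fun t => hub t⟩
  have hcob : Filter.IsCoboundedUnder (· ≥ ·) Filter.atTop u :=
    hbddup.isCoboundedUnder_ge
  have hle : ∀ ε : ℝ, 0 < ε → Filter.atTop.liminf u ≤ A + ε := fun ε hε =>
    Filter.liminf_le_of_frequently_le (h2 ε hε) hbdd
  have hge : ∀ ε : ℝ, 0 < ε → A - ε ≤ Filter.atTop.liminf u := fun ε hε =>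
    Filter.le_liminf_of_le hcob (h1 ε hε)
  have h3 : Filter.atTop.liminf u ≤ A := by
    by_contra hc
    push_neg at hc
    have := hle ((Filter.atTop.liminf u - A)/2) (by linarith)
    linarith
  have h4 : A ≤ Filter.atTop.liminf u := by
    by_contra hc
    push_neg at hc
    have := hge ((A - Filter.atTop.liminf u)/2) (by linarith)
    linarith
  linarith

/-! ### liminf of an eventually periodic orbit -/

/-- from time `Tt` on, the digits cycle through `W j` -/
def TailPer (m : ℕ → ℕ) (j Tt : ℕ) : Prop :=
  ∀ i : ℕ, win m (Tt + i * pl j) (pl j) = W j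

section TailPerLiminf

variable (lam : ℕ → ℝ) (hfix : ∀ n, 1 ≤ n → compList (Mword n) (lam n) = lam n)

include hfix

lemma tailper_liminf (m : ℕ → ℕ) (hm : ∀ i, 2 ≤ m i) (j Tt : ℕ) (hj : 1 ≤ j)
    (h : TailPer m j Tt) : Filter.atTop.liminf (orb m) = lam j := by
  have hp1 : 1 ≤ pl j := pl_pos j hj
  have hP2 : 2 ≤ Pr j := Pr_ge_two j hj
  have hPpos : (0:ℝ) < Pr j := by linarith
  set x : ℕ → ℝ := fun i => orb m (Tt + i * pl j) with hxdef
  have hstep : ∀ i, x (i+1) = apL (W j) (x i) := by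
    intro i
    have hidx : Tt + (i+1) * pl j = (Tt + i * pl j) + pl j := by ring
    show orb m (Tt + (i+1) * pl j) = _
    rw [hidx, orb_win, h i]
  have hconv : ∀ i, |x i - lam j| ≤ (1/2)^i := by
    intro i
    induction i with
    | zero =>
        have h0 := orb_mem m hm (Tt + 0 * pl j)
        have hl1 := lam_pos lam hfix j hj
        have hl2 := lam_le_third lam hfix j hj
        rw [pow_zero]
        rw [abs_le]
        constructor <;> simp only [hxdef] <;> nlinarith [h0.1, h0.2]
    | succ i ih =>
        rw [hstep i, apLW lam hfix j hj]
        have : lam j - (x i - lam j)/Pr j - lam j = -((x i - lam j)/Pr j) := by ring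
        rw [this, abs_neg, abs_div, abs_of_pos hPpos]
        calc |x i - lam j| / Pr j ≤ |x i - lam j| / 2 :=
              div_le_div₀ (abs_nonneg _) (le_refl _) (by norm_num) hP2
          _ ≤ (1/2)^i / 2 := by
              apply div_le_div₀ (by positivity) ih (by norm_num) (le_refl 2)
          _ = (1/2)^(i+1) := by rw [pow_succ]; ring
  have hmid : ∀ i r, r ≤ pl j →
      orb m (Tt + i * pl j + r) = apL ((W j).take r) (x i) := by
    intro i r hr
    rw [orb_win]
    congr 1
    rw [win_take m (Tt + i * pl j) (pl j) r hr, h i]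
  -- lower bound
  have hlow : ∀ i r, r ≤ pl j → lam j - (1/2)^i ≤ orb m (Tt + i * pl j + r) := by
    intro i r hr
    rw [hmid i r hr, cyc_sub lam j r hr (x i)]
    have hc := cyc_ge lam hfix j hj r hr
    have hPP1 := PP_take_ge_one j r
    have habs : |(-1:ℝ)^r * (x i - lam j) / PP ((W j).take r)| ≤ (1/2)^i := by
      rw [abs_div, abs_mul, abs_pow, abs_neg, abs_one, one_pow, one_mul,
          abs_of_pos (by linarith : (0:ℝ) < PP ((W j).take r))]
      calc |x i - lam j| / PP ((W j).take r) ≤ |x i - lam j| / 1 :=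
            div_le_div₀ (abs_nonneg _) (le_refl _) (by norm_num) hPP1
        _ = |x i - lam j| := by rw [div_one]
        _ ≤ (1/2)^i := hconv i
    have := neg_abs_le ((-1:ℝ)^r * (x i - lam j) / PP ((W j).take r))
    linarith
  apply liminf_eq_of (orb m) (lam j) (fun t => (orb_mem m hm t).1)
    (fun t => (orb_mem m hm t).2)
  · -- eventually lower
    intro ε hε
    obtain ⟨i₀, hi₀⟩ : ∃ i₀ : ℕ, (1/2:ℝ)^i₀ < ε :=
      exists_pow_lt_of_lt_one hε (by norm_num)
    rw [Filter.eventually_atTop]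
    refine ⟨Tt + i₀ * pl j, fun t ht => ?_⟩
    -- decompose t
    obtain ⟨s, rfl⟩ : ∃ s, t = Tt + s := ⟨t - Tt, by omega⟩
    set i := s / pl j with hidef
    set r := s % pl j with hrdef
    have hsm : pl j * i + r = s := Nat.div_add_mod s (pl j)
    have hsm' : i * pl j + r = s := by rw [Nat.mul_comm (pl j) i] at hsm; exact hsm
    have hdecomp : Tt + s = Tt + i * pl j + r := by omega
    have hrlt : r < pl j := Nat.mod_lt _ (by omega)
    have hii : i₀ ≤ i := by
      have hs : i₀ * pl j ≤ s := Nat.add_le_add_iff_left.1 ht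
      rw [hidef]
      exact Nat.le_div_iff_mul_le (by omega) |>.2 hs
    have hmon : (1/2:ℝ)^i ≤ (1/2)^i₀ :=
      pow_le_pow_of_le_one (by norm_num) (by norm_num) hii
    have := hlow i r hrlt.le
    rw [hdecomp]
    linarith
  · -- frequently upper
    intro ε hε
    rw [Filter.frequently_atTop]
    intro N
    obtain ⟨i₀, hi₀⟩ : ∃ i₀ : ℕ, (1/2:ℝ)^i₀ < ε :=
      exists_pow_lt_of_lt_one hε (by norm_num)
    set i := max i₀ N with hii
    refine ⟨Tt + i * pl j, by
      have ha : i ≤ i * pl j := Nat.le_mul_of_pos_right _ (by omega)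
      have hbN : N ≤ i := le_max_right _ _
      omega, ?_⟩
    have hc := hconv i
    have hmon : (1/2:ℝ)^i ≤ (1/2)^i₀ :=
      pow_le_pow_of_le_one (by norm_num) (by norm_num) (le_max_left _ _)
    have habs := abs_le.1 hc
    show orb m (Tt + i * pl j) ≤ lam j + ε
    have : orb m (Tt + i * pl j) = x i := rfl
    rw [this]
    linarith [habs.2]

end TailPerLiminf

end Pf
namespace Pf

/-! ### achievability of lam j -/

section Achieve

variable (lam : ℕ → ℝ) (hfix : ∀ n, 1 ≤ n → compList (Mword n) (lam n) = lam n)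

include hfix

lemma lam_mem (j : ℕ) (hj : 1 ≤ j) : lam j ∈ Lset := by
  have hp1 : 1 ≤ pl j := pl_pos j hj
  set m : ℕ → ℕ := fun i => (W j).getD (i % pl j) 2 with hmdef
  have hmlt : ∀ i : ℕ, i % pl j < (W j).length := by
    intro i
    rw [W_length]
    exact Nat.mod_lt _ (by omega)
  have hm : ∀ i, 2 ≤ m i := by
    intro i
    show 2 ≤ (W j).getD (i % pl j) 2
    rw [List.getD_eq_getElem _ _ (hmlt i)]
    exact W_digits j _ (List.getElem_mem _)
  have hper : TailPer m j 0 := by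
    intro i
    have hl : pl j = (W j).length := (W_length j).symm
    rw [hl]
    apply win_congr
    intro q hq
    show (W j).getD ((0 + i * (W j).length + q) % pl j) 2 = (W j).getD q 2
    have hmod : (0 + i * (W j).length + q) % pl j = q := by
      rw [Nat.zero_add, ← hl]
      rw [Nat.add_comm (i * pl j) q, Nat.add_mul_mod_self_right]
      exact Nat.mod_eq_of_lt (by rw [hl]; exact hq)
    rw [hmod]
  exact ⟨m, hm, tailper_liminf lam hfix m hm j 0 hj hper⟩

end Achieve

/-! ### achievability of lam0 -/

def Cc : ℕ → List ℕ
  | 0 => []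
  | (k+1) => Cc k ++ W (k+2)

lemma Cc_len_succ (k : ℕ) : (Cc (k+1)).length = (Cc k).length + pl (k+2) := by
  show (Cc k ++ W (k+2)).length = _
  rw [List.length_append, W_length]

lemma Cc_digits (k : ℕ) : ∀ d ∈ Cc k, 2 ≤ d := by
  induction k with
  | zero => intro d hd; simp [Cc] at hd
  | succ k ih =>
      intro d hd
      rcases List.mem_append.1 hd with h | h
      · exact ih d h
      · exact W_digits _ d h

lemma Cc_len_ge (k : ℕ) : k ≤ (Cc k).length := by
  induction k with
  | zero => omega
  | succ k ih =>
      rw [Cc_len_succ]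
      have := pl_pos (k+2) (by omega)
      omega

lemma Cc_prefix_le (a b : ℕ) (h : a ≤ b) : Cc a <+: Cc b := by
  induction b, h using Nat.le_induction with
  | base => exact List.prefix_refl _
  | succ b hb ih => exact ih.trans ⟨W (b+2), rfl⟩

lemma getD_prefix (l1 l2 : List ℕ) (h : l1 <+: l2) (i : ℕ) (hi : i < l1.length) :
    l1.getD i 2 = l2.getD i 2 := by
  obtain ⟨u, hu⟩ := h
  rw [← hu, List.getD_eq_getElem _ _ hi]
  have hi2 : i < (l1 ++ u).length := by rw [List.length_append]; omega
  rw [List.getD_eq_getElem _ _ hi2, List.getElem_append_left hi]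

def md : ℕ → ℕ := fun i => (Cc (i+1)).getD i 2

lemma md_eq (k i : ℕ) (hi : i < (Cc k).length) : md i = (Cc k).getD i 2 := by
  unfold md
  rcases le_or_gt (i+1) k with h | h
  · exact getD_prefix _ _ (Cc_prefix_le _ _ h) i
      (by have := Cc_len_ge (i+1); omega)
  · exact (getD_prefix _ _ (Cc_prefix_le k (i+1) (by omega)) i hi).symm

lemma md_digits : ∀ i, 2 ≤ md i := by
  intro i
  unfold md
  have hi : i < (Cc (i+1)).length := by have := Cc_len_ge (i+1); omega
  rw [List.getD_eq_getElem _ _ hi]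
  exact Cc_digits _ _ (List.getElem_mem _)

lemma win_Cc (k : ℕ) : win md 0 ((Cc k).length) = Cc k := by
  apply win_congr
  intro q hq
  rw [Nat.zero_add]
  exact md_eq k q hq

lemma orb_Cc (k : ℕ) : orb md ((Cc k).length) = apL (Cc k) 0 := by
  have h := orb_win md 0 ((Cc k).length)
  rw [Nat.zero_add] at h
  rw [h, win_Cc]
  rfl

lemma win_block (k : ℕ) : win md ((Cc (k+1)).length) (pl (k+3)) = W (k+3) := by
  have hl : pl (k+3) = (W (k+3)).length := (W_length (k+3)).symm
  rw [hl]
  apply win_congr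
  intro q hq
  have hlen2 : (Cc (k+2)).length = (Cc (k+1)).length + pl (k+3) := Cc_len_succ (k+1)
  have hq' : q < pl (k+3) := by rw [hl]; exact hq
  have h1 : md ((Cc (k+1)).length + q) = (Cc (k+2)).getD ((Cc (k+1)).length + q) 2 :=
    md_eq (k+2) _ (by omega)
  rw [h1]
  have hsplit : Cc (k+2) = Cc (k+1) ++ W (k+3) := rfl
  rw [hsplit]
  have hidx : (Cc (k+1)).length + q < (Cc (k+1) ++ W (k+3)).length := by
    rw [List.length_append, W_length]; omega
  rw [List.getD_eq_getElem _ _ hidx,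
      List.getD_eq_getElem _ _ (by rw [W_length]; omega : q < (W (k+3)).length)]
  rw [List.getElem_append_right (by omega)]
  congr 1
  omega

section Lam0Mem

variable (lam : ℕ → ℝ) (hfix : ∀ n, 1 ≤ n → compList (Mword n) (lam n) = lam n)

include hfix

lemma Dl_geo : ∀ i, Dl lam (2+i) ≤ Dl lam 2 * (1/2)^i := by
  intro i
  induction i with
  | zero => simp
  | succ i ih =>
      have h1 : Dl lam (2+i+1) ≤ Dl lam (2+i) / 2 := Dl_half lam hfix (2+i) (by omega)
      have h2 : (0:ℝ) < (1/2)^i := by positivity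
      have h3 : 2 + (i+1) = (2+i) + 1 := by omega
      rw [h3]
      calc Dl lam ((2+i)+1) ≤ Dl lam (2+i)/2 := h1
        _ ≤ (Dl lam 2 * (1/2)^i)/2 := by linarith
        _ = Dl lam 2 * (1/2)^(i+1) := by rw [pow_succ]; ring

lemma lam_sub_lam0 (n : ℕ) (hn : 1 ≤ n) : lam n - lam0 ≤ 2 * Dl lam n := by
  have h := lam_tail lam hfix n hn
  have hkey : lam n - 2 * Dl lam n ≤ lam0 := by
    apply ge_of_tendsto (lam_tendsto lam hfix)
    rw [Filter.eventually_atTop]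
    refine ⟨n, fun m hm => ?_⟩
    obtain ⟨i, rfl⟩ : ∃ i, m = n + i := ⟨m - n, by omega⟩
    have h1 := h i
    have h2 := Dl_pos lam hfix (n+i) (by omega)
    linarith
  linarith

lemma lam0_mem : lam0 ∈ Lset := by
  refine ⟨md, md_digits, ?_⟩
  -- the block end values
  set v : ℕ → ℝ := fun k => orb md ((Cc k).length) with hvdef
  have hvb : ∀ k, 0 ≤ v k ∧ v k ≤ 1/2 := fun k => orb_mem md md_digits _
  have hvrec : ∀ k, v (k+1) = apL (W (k+2)) (v k) := by
    intro k
    have h1 : v (k+1) = apL (Cc (k+1)) 0 := orb_Cc (k+1)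
    have h2 : v k = apL (Cc k) 0 := orb_Cc k
    rw [h1, h2]
    show apL (Cc k ++ W (k+2)) 0 = _
    rw [apL_append]
  -- distance to partial sums
  have hvS : ∀ k, |v (k+1) - ∑ l ∈ Finset.range (pl (k+2)), sa l| ≤ (1/2:ℝ)^(pl (k+2)) := by
    intro k
    rw [S_eq, Mpre_eq (k+2) (by omega)]
    have hc : compList (Mword (k+2)) 0 = apL (W (k+2)) 0 := compList_eq_apL _ 0
    rw [hc, hvrec k]
    have h := apL_sub (W (k+2)) (W_digits (k+2)) (v k) 0
    rw [W_length] at h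
    have hPP : (2:ℝ)^(pl (k+2)) ≤ PP (W (k+2)) := by
      have := PP_ge_pow (W (k+2)) (W_digits (k+2))
      rwa [W_length] at this
    have hPPpos : (0:ℝ) < PP (W (k+2)) := by
      have : (0:ℝ) < 2^(pl (k+2)) := by positivity
      linarith
    rw [h, abs_div, abs_mul, abs_pow, abs_neg, abs_one, one_pow, one_mul,
        abs_of_pos hPPpos, sub_zero, abs_of_nonneg (hvb k).1]
    calc v k / PP (W (k+2)) ≤ 1 / 2^(pl (k+2)) :=
          div_le_div₀ (by norm_num) (by linarith [(hvb k).2]) (by positivity) hPP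
      _ = (1/2:ℝ)^(pl (k+2)) := by rw [div_pow, one_pow]
  have hvlam : ∀ k, |v (k+1) - lam (k+2)| ≤ 2 * (1/2:ℝ)^(pl (k+2)) := by
    intro k
    have h1 := hvS k
    have h2 := lam_vs_S lam hfix (k+2) (by omega)
    calc |v (k+1) - lam (k+2)|
        = |(v (k+1) - ∑ l ∈ Finset.range (pl (k+2)), sa l)
          - (lam (k+2) - ∑ l ∈ Finset.range (pl (k+2)), sa l)| := by ring_nf
      _ ≤ |v (k+1) - ∑ l ∈ Finset.range (pl (k+2)), sa l|
          + |lam (k+2) - ∑ l ∈ Finset.range (pl (k+2)), sa l| := abs_sub _ _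
      _ ≤ _ := by linarith
  -- total error bound (for k ≥ 1)
  have herr : ∀ k, 1 ≤ k → |v (k+1) - lam (k+3)| ≤ (1/2:ℝ)^k := by
    intro k hk
    have h1 := hvlam k
    have hpl : k + 2 ≤ pl (k+2) := pl_ge (k+2) (by omega)
    have hgeo : (1/2:ℝ)^(pl (k+2)) ≤ (1/2)^(k+2) :=
      pow_le_pow_of_le_one (by norm_num) (by norm_num) hpl
    have hDl : Dl lam (k+2) ≤ Dl lam 2 * (1/2)^k := by
      have := Dl_geo lam hfix k
      rwa [Nat.add_comm 2 k] at this
    have hDl2 : Dl lam 2 = 1/52 := Dl_two lam hfix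
    have hd : lam (k+2) - lam (k+3) = Dl lam (k+2) := rfl
    have hDlpos : 0 < Dl lam (k+2) := Dl_pos lam hfix (k+2) (by omega)
    have htri : |v (k+1) - lam (k+3)| ≤ |v (k+1) - lam (k+2)| + Dl lam (k+2) := by
      calc |v (k+1) - lam (k+3)| = |(v (k+1) - lam (k+2)) + (lam (k+2) - lam (k+3))| := by
            ring_nf
        _ ≤ |v (k+1) - lam (k+2)| + |lam (k+2) - lam (k+3)| := abs_add_le _ _
        _ = |v (k+1) - lam (k+2)| + Dl lam (k+2) := by
            rw [hd, abs_of_pos hDlpos]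
    have hp2 : (0:ℝ) < (1/2)^k := by positivity
    have hq2 : ((1/2:ℝ))^(k+2) = (1/2)^k * (1/4) := by
      rw [pow_add]; norm_num
    nlinarith
  -- locate blocks
  have hlocate : ∀ tt K : ℕ, (Cc (K+1)).length ≤ tt →
      ∃ k, K ≤ k ∧ (Cc (k+1)).length ≤ tt ∧ tt < (Cc (k+2)).length := by
    intro tt K h
    have hK_le : K ≤ tt := le_trans (by have := Cc_len_ge (K+1); omega) h
    have hPk : (Cc (Nat.findGreatest (fun k => (Cc (k+1)).length ≤ tt) tt + 1)).length ≤ tt :=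
      Nat.findGreatest_spec (P := fun k => (Cc (k+1)).length ≤ tt) hK_le h
    have hKk : K ≤ Nat.findGreatest (fun k => (Cc (k+1)).length ≤ tt) tt :=
      Nat.le_findGreatest (P := fun k => (Cc (k+1)).length ≤ tt) hK_le h
    refine ⟨_, hKk, hPk, ?_⟩
    by_contra hc
    push_neg at hc
    have hk1 : Nat.findGreatest (fun k => (Cc (k+1)).length ≤ tt) tt + 1 ≤ tt :=
      le_trans (by have := Cc_len_ge (Nat.findGreatest (fun k => (Cc (k+1)).length ≤ tt) tt + 2); omega) hc
    exact (Nat.findGreatest_is_greatest (P := fun k => (Cc (k+1)).length ≤ tt)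
      (Nat.lt_succ_self _) hk1) hc
  -- mid-block formula
  have hmidb : ∀ k r, r ≤ pl (k+3) →
      orb md ((Cc (k+1)).length + r) = apL ((W (k+3)).take r) (v (k+1)) := by
    intro k r hr
    rw [orb_win]
    congr 1
    rw [win_take md _ (pl (k+3)) r hr, win_block]
  apply liminf_eq_of _ lam0 (fun t => (orb_mem md md_digits t).1)
    (fun t => (orb_mem md md_digits t).2)
  · -- eventually lower
    intro ε hε
    obtain ⟨K₀, hK₀⟩ : ∃ K : ℕ, (1/2:ℝ)^K < ε :=
      exists_pow_lt_of_lt_one hε (by norm_num)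
    set K := K₀ + 1
    rw [Filter.eventually_atTop]
    refine ⟨(Cc (K+1)).length, fun t ht => ?_⟩
    obtain ⟨k, hKk, h1, h2⟩ := hlocate t K ht
    obtain ⟨r, rfl⟩ : ∃ r, t = (Cc (k+1)).length + r := ⟨t - (Cc (k+1)).length, by omega⟩
    have hrlt : r < pl (k+3) := by
      have hls : (Cc (k+2)).length = (Cc (k+1)).length + pl (k+3) := Cc_len_succ (k+1)
      omega
    rw [hmidb k r hrlt.le, cyc_sub lam (k+3) r hrlt.le (v (k+1))]
    have hcy := cyc_ge lam hfix (k+3) (by omega) r hrlt.le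
    have hl0 := lam0_le lam hfix (k+3) (by omega)
    have hPP1 := PP_take_ge_one (k+3) r
    have hek := herr k (by omega)
    have hgeoK : (1/2:ℝ)^k ≤ (1/2)^K :=
      pow_le_pow_of_le_one (by norm_num) (by norm_num) hKk
    have hKK : ((1/2:ℝ))^K ≤ (1/2)^K₀ :=
      pow_le_pow_of_le_one (by norm_num) (by norm_num) (by omega)
    have habs : |(-1:ℝ)^r * (v (k+1) - lam (k+3)) / PP ((W (k+3)).take r)| ≤ (1/2)^k := by
      rw [abs_div, abs_mul, abs_pow, abs_neg, abs_one, one_pow, one_mul,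
          abs_of_pos (by linarith : (0:ℝ) < PP ((W (k+3)).take r))]
      calc |v (k+1) - lam (k+3)| / PP ((W (k+3)).take r)
          ≤ |v (k+1) - lam (k+3)| / 1 :=
            div_le_div₀ (abs_nonneg _) (le_refl _) (by norm_num) hPP1
        _ = |v (k+1) - lam (k+3)| := by rw [div_one]
        _ ≤ (1/2)^k := hek
    have := neg_abs_le ((-1:ℝ)^r * (v (k+1) - lam (k+3)) / PP ((W (k+3)).take r))
    linarith
  · -- frequently upper
    intro ε hε
    rw [Filter.frequently_atTop]
    intro N
    obtain ⟨K₀, hK₀⟩ : ∃ K : ℕ, (1/2:ℝ)^K < ε :=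
      exists_pow_lt_of_lt_one hε (by norm_num)
    set k := max (K₀ + 2) N with hk
    refine ⟨(Cc (k+1)).length, by
      have h1 := Cc_len_ge (k+1)
      have h2 : N ≤ k := le_max_right _ _
      omega, ?_⟩
    show orb md ((Cc (k+1)).length) ≤ lam0 + ε
    have hv1 : orb md ((Cc (k+1)).length) = v (k+1) := rfl
    rw [hv1]
    have h1 := hvlam k
    have h2 := lam_sub_lam0 lam hfix (k+2) (by omega)
    have hpl : k + 2 ≤ pl (k+2) := pl_ge (k+2) (by omega)
    have hgeo : (1/2:ℝ)^(pl (k+2)) ≤ (1/2)^(k+2) :=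
      pow_le_pow_of_le_one (by norm_num) (by norm_num) hpl
    have hDl : Dl lam (k+2) ≤ Dl lam 2 * (1/2)^k := by
      have := Dl_geo lam hfix k
      rwa [Nat.add_comm 2 k] at this
    have hDl2 : Dl lam 2 = 1/52 := Dl_two lam hfix
    have hgeoK : (1/2:ℝ)^k ≤ (1/2)^(K₀+2) :=
      pow_le_pow_of_le_one (by norm_num) (by norm_num) (le_max_left _ _)
    have hKK : ((1/2:ℝ))^(K₀+2) ≤ (1/2)^K₀ :=
      pow_le_pow_of_le_one (by norm_num) (by norm_num) (by omega)
    have habs := abs_le.1 h1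
    have hq2 : ((1/2:ℝ))^(k+2) = (1/2)^k * (1/4) := by
      rw [pow_add]; norm_num
    have hp2 : (0:ℝ) < (1/2)^k := by positivity
    nlinarith [habs.2]

end Lam0Mem

end Pf
namespace Pf

/-! ### parses of the digit stream into blocks -/

def bl (k : ℕ) (b : Bool) : List ℕ := if b then W (k+1) else W k

lemma bl_true (k : ℕ) : bl k true = W (k+1) := rfl
lemma bl_false (k : ℕ) : bl k false = W k := rfl

def Parse (m : ℕ → ℕ) (k T : ℕ) (σ : ℕ → Bool) (τ : ℕ → ℕ) : Prop :=
  τ 0 = T ∧ ∀ i, win m (τ i) (bl k (σ i)).length = bl k (σ i)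
            ∧ τ (i+1) = τ i + (bl k (σ i)).length

lemma parse_orb (m : ℕ → ℕ) (k T : ℕ) (σ : ℕ → Bool) (τ : ℕ → ℕ)
    (hp : Parse m k T σ τ) (i : ℕ) :
    orb m (τ (i+1)) = apL (bl k (σ i)) (orb m (τ i)) := by
  rw [(hp.2 i).2, orb_win, (hp.2 i).1]

lemma parse_mono (m : ℕ → ℕ) (k T : ℕ) (σ : ℕ → Bool) (τ : ℕ → ℕ)
    (hp : Parse m k T σ τ) (i : ℕ) : T ≤ τ i := by
  induction i with
  | zero => rw [hp.1]
  | succ i ih =>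
      rw [(hp.2 i).2]
      omega

/-! ### kill inequalities -/

lemma Pr_sq_le : ∀ k, 1 ≤ k → Pr k ^ 2 ≤ 2 * Pr (k+1) := by
  intro k
  induction k using Nat.strong_induction_on with
  | _ k ih =>
    match k with
    | 0 => intro h; exact absurd h (by norm_num)
    | 1 => intro _; rw [Pr_one, Pr_two]; norm_num
    | 2 => intro _; rw [Pr_two, Pr_three]; norm_num
    | (j+3) =>
      intro _
      have h1 : Pr (j+1) ^ 2 ≤ 2 * Pr (j+2) := ih (j+1) (by omega) (by omega)
      have h2 : Pr (j+2) ^ 2 ≤ 2 * Pr (j+3) := ih (j+2) (by omega) (by omega)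
      have hrec : Pr (j+3) = Pr (j+1)^2 * Pr (j+2) := Pr_rec j
      have hrec2 : Pr (j+4) = Pr (j+2)^2 * Pr (j+3) := Pr_rec (j+1)
      have hp1 : 2 ≤ Pr (j+1) := Pr_ge_two _ (by omega)
      have hp2 : 2 ≤ Pr (j+2) := Pr_ge_two _ (by omega)
      have hp3 : 2 ≤ Pr (j+3) := Pr_ge_two _ (by omega)
      rw [hrec2, hrec]
      nlinarith [mul_le_mul_of_nonneg_right h1
        (by positivity : (0:ℝ) ≤ Pr (j+1)^2 * Pr (j+2)^2)]

section Kill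

variable (lam : ℕ → ℝ) (hfix : ∀ n, 1 ≤ n → compList (Mword n) (lam n) = lam n)
variable (ℓ : ℕ) (hl : 1 ≤ ℓ)

include hfix

/-- difference of two Dl-recursions rearranged -/
lemma DRec' (k : ℕ) (hk : 1 ≤ k) :
    Dl lam (k+1) * (Pr k ^2 * Pr (k+1) + 1) = Dl lam k * (Pr k ^2 - 1) := by
  obtain ⟨j, rfl⟩ : ∃ j, k = j + 1 := ⟨k - 1, by omega⟩
  exact DRec lam hfix j

lemma Pr_rec' (k : ℕ) (hk : 1 ≤ k) : Pr (k+2) = Pr k ^2 * Pr (k+1) := by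
  obtain ⟨j, rfl⟩ : ∃ j, k = j + 1 := ⟨k - 1, by omega⟩
  exact Pr_rec j

lemma pl_rec' (k : ℕ) (hk : 1 ≤ k) : pl (k+2) = pl (k+1) + 2 * pl k := by
  obtain ⟨j, rfl⟩ : ∃ j, k = j + 1 := ⟨k - 1, by omega⟩
  exact pl_rec j

lemma W_rec' (k : ℕ) (hk : 1 ≤ k) : W (k+2) = W k ++ W k ++ W (k+1) := by
  obtain ⟨j, rfl⟩ : ∃ j, k = j + 1 := ⟨k - 1, by omega⟩
  exact W_rec j

include hl in
/-- the gap between `lam (k+1)` and the ambient bound -/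
lemma zone_gap (k : ℕ) (hk : 1 ≤ k) (hkl : k ≤ ℓ) :
    lam (k+1) - lam (ℓ+1) ≤ Dl lam (k+1) + 2 * Dl lam (k+2) := by
  rcases eq_or_lt_of_le hkl with rfl | hlt
  · have h1 := Dl_pos lam hfix (k+1) (by omega)
    have h2 := Dl_pos lam hfix (k+2) (by omega)
    linarith
  · have h := lam_ge_sub lam hfix (k+2) (by omega) (ℓ+1) (by omega)
    have hdl : lam (k+1) - lam (k+2) = Dl lam (k+1) := rfl
    linarith

-- key estimate : `Dl k ≥ r·Dl (k+1) + 2r·Dl (k+2)` where `r = Pr (k+1)`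
set_option maxHeartbeats 1000000 in
lemma kill_sum (k : ℕ) (hk : 1 ≤ k) :
    Pr (k+1) * (Dl lam (k+1) + 2 * Dl lam (k+2)) ≤ Dl lam k := by
  set p := Pr k with hp
  set r := Pr (k+1) with hr
  have hp2 : 2 ≤ p := Pr_ge_two k hk
  have hr3 : 3 ≤ r := Pr_ge_three (k+1) (by omega)
  have hD1 : 0 < Dl lam k := Dl_pos lam hfix k hk
  have hD2 : 0 < Dl lam (k+1) := Dl_pos lam hfix (k+1) (by omega)
  have hD3 : 0 < Dl lam (k+2) := Dl_pos lam hfix (k+2) (by omega)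
  have e1 : Dl lam (k+1) * (p^2 * r + 1) = Dl lam k * (p^2 - 1) := DRec' lam hfix k hk
  have e2' : Dl lam (k+2) * (r^2 * Pr (k+2) + 1) = Dl lam (k+1) * (r^2 - 1) :=
    DRec' lam hfix (k+1) (by omega)
  have hPr2 : Pr (k+2) = p^2 * r := Pr_rec' lam hfix k hk
  rw [hPr2] at e2'
  have hq2r : p^2 ≤ 2*r := Pr_sq_le k hk
  -- step 1 : Dl (k+2) * (p^2*r) ≤ Dl (k+1)
  have s1 : Dl lam (k+2) * (p^2 * r) ≤ Dl lam (k+1) := by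
    nlinarith [mul_pos hD3 (mul_pos (mul_pos
      (lt_of_lt_of_le (by norm_num : (0:ℝ) < 2) hp2)
      (lt_of_lt_of_le (by norm_num : (0:ℝ) < 2) hp2))
      (lt_of_lt_of_le (by norm_num : (0:ℝ) < 3) hr3)), sq_nonneg r, hD3.le]
  -- step 2 : 2*r*Dl (k+2) ≤ Dl (k+1) / 2
  have s2 : 2 * r * Dl lam (k+2) ≤ Dl lam (k+1) / 2 := by
    have h4 : (4:ℝ) ≤ p^2 := by nlinarith
    nlinarith [s1, mul_le_mul_of_nonneg_right h4
      (mul_nonneg (by linarith : (0:ℝ) ≤ r) hD3.le)]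
  -- step 3 : r * Dl (k+1) + Dl (k+1)/2 ≤ Dl k
  have s3 : r * Dl lam (k+1) + Dl lam (k+1)/2 ≤ Dl lam k := by
    have hfac : (0:ℝ) < p^2 - 1 := by nlinarith
    have key : (r * Dl lam (k+1) + Dl lam (k+1)/2) * (p^2 - 1)
        ≤ Dl lam k * (p^2 - 1) := by
      rw [← e1]
      nlinarith [mul_nonneg hD2.le (by linarith : (0:ℝ) ≤ 2*r + 3 - p^2)]
    exact le_of_mul_le_mul_right key hfac
  nlinarith

include hl in
lemma kill_odd_core (k : ℕ) (hk : 1 ≤ k) (hkl : k ≤ ℓ) (y : ℝ) (hy : lam k ≤ y) :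
    apL (W (k+1)) y ≤ lam (ℓ+1) := by
  rw [apLW lam hfix (k+1) (by omega)]
  have hr3 : 3 ≤ Pr (k+1) := Pr_ge_three (k+1) (by omega)
  have hrpos : (0:ℝ) < Pr (k+1) := by linarith
  have hgap := zone_gap lam hfix ℓ hl k hk hkl
  have hsum := kill_sum lam hfix k hk
  have hdl : lam k - lam (k+1) = Dl lam k := rfl
  -- (y - lam (k+1)) / Pr (k+1) ≥ Dl k / Pr (k+1) ≥ Dl (k+1) + 2 Dl (k+2) ≥ lam (k+1) - lam (ℓ+1)
  have h1 : Dl lam k ≤ y - lam (k+1) := by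
    rw [← hdl]; linarith
  have h2 : Dl lam k / Pr (k+1) ≤ (y - lam (k+1)) / Pr (k+1) :=
    (div_le_div_iff_of_pos_right hrpos).2 h1
  have h3 : Dl lam (k+1) + 2 * Dl lam (k+2) ≤ Dl lam k / Pr (k+1) := by
    rw [le_div_iff₀ hrpos]
    nlinarith [hsum]
  linarith

-- scaled version of the even-kill estimate
set_option maxHeartbeats 1000000 in
lemma kill_even_sum (k : ℕ) (hk : 1 ≤ k) :
    (Pr (k+1) * Pr k ^4 + 1) * (Dl lam (k+1) + 2 * Dl lam (k+2))
      ≤ Dl lam k * (Pr k ^ 4 - 1) := by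
  set p := Pr k with hp
  set r := Pr (k+1) with hr
  have hp2 : 2 ≤ p := Pr_ge_two k hk
  have hr3 : 3 ≤ r := Pr_ge_three (k+1) (by omega)
  have hppos : (0:ℝ) < p := by linarith
  have hrpos : (0:ℝ) < r := by linarith
  have hD1 : 0 < Dl lam k := Dl_pos lam hfix k hk
  have hD2 : 0 < Dl lam (k+1) := Dl_pos lam hfix (k+1) (by omega)
  have hD3 : 0 < Dl lam (k+2) := Dl_pos lam hfix (k+2) (by omega)
  have e1 : Dl lam (k+1) * (p^2 * r + 1) = Dl lam k * (p^2 - 1) := DRec' lam hfix k hk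
  have e2' : Dl lam (k+2) * (r^2 * Pr (k+2) + 1) = Dl lam (k+1) * (r^2 - 1) :=
    DRec' lam hfix (k+1) (by omega)
  have hPr2 : Pr (k+2) = p^2 * r := Pr_rec' lam hfix k hk
  rw [hPr2] at e2'
  -- step 1 : Dl (k+2) * (p^2*r) ≤ Dl (k+1)
  have s1 : Dl lam (k+2) * (p^2 * r) ≤ Dl lam (k+1) := by
    nlinarith [mul_pos hD3 (mul_pos (mul_pos hppos hppos) hrpos), sq_nonneg r, hD3.le]
  -- step g1 : (Dl (k+1) + 2 Dl (k+2)) * (p^2*r) ≤ Dl (k+1) * (p^2*r + 2)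
  have g1 : (Dl lam (k+1) + 2*Dl lam (k+2)) * (p^2*r) ≤ Dl lam (k+1) * (p^2*r + 2) := by
    nlinarith [s1]
  -- step g2 : polynomial inequality
  have g2 : (r*p^4+1) * (p^2*r+2) * (p^2-1) ≤ (p^4-1) * (p^2*r) * (p^2*r+1) := by
    have hfact : (p^4-1) * (p^2*r) * (p^2*r+1) - (r*p^4+1) * (p^2*r+2) * (p^2-1)
        = (p^2-1)*(p^4*r^2 - p^4*r - 2) := by ring
    have hkey : (0:ℝ) ≤ p^4*r^2 - p^4*r - 2 := by
      have hpp : (4:ℝ) ≤ p^2 := by nlinarith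
      have hp4 : (16:ℝ) ≤ p^4 := by
        nlinarith [mul_nonneg (by linarith : (0:ℝ) ≤ p^2 - 4)
          (by positivity : (0:ℝ) ≤ p^2 + 4)]
      have hrr : (6:ℝ) ≤ r^2 - r := by nlinarith
      nlinarith [mul_le_mul hp4 hrr (by norm_num) (by positivity)]
    nlinarith [mul_nonneg (by nlinarith : (0:ℝ) ≤ p^2 - 1) hkey]
  -- combine, with positive factor (p^2*r)*(p^2*r+1)
  have hfacpos : (0:ℝ) < (p^2*r)*(p^2*r+1) := by positivity
  have main : ((r*p^4+1) * (Dl lam (k+1) + 2*Dl lam (k+2))) * ((p^2*r)*(p^2*r+1))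
      ≤ (Dl lam k * (p^4-1)) * ((p^2*r)*(p^2*r+1)) := by
    have c1 : ((r*p^4+1) * (Dl lam (k+1) + 2*Dl lam (k+2))) * ((p^2*r)*(p^2*r+1))
        = (r*p^4+1) * (p^2*r+1) * ((Dl lam (k+1) + 2*Dl lam (k+2)) * (p^2*r)) := by ring
    have c2 : (r*p^4+1) * (p^2*r+1) * ((Dl lam (k+1) + 2*Dl lam (k+2)) * (p^2*r))
        ≤ (r*p^4+1) * (p^2*r+1) * (Dl lam (k+1) * (p^2*r + 2)) := by
      apply mul_le_mul_of_nonneg_left g1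
      positivity
    have c3 : (r*p^4+1) * (p^2*r+1) * (Dl lam (k+1) * (p^2*r + 2))
        = (r*p^4+1) * (p^2*r+2) * (Dl lam (k+1) * (p^2*r + 1)) := by ring
    have c4 : Dl lam (k+1) * (p^2*r + 1) = Dl lam k * (p^2-1) := e1
    have c5 : (r*p^4+1) * (p^2*r+2) * (Dl lam k * (p^2-1))
        ≤ Dl lam k * ((p^4-1) * (p^2*r) * (p^2*r+1)) := by
      have := mul_le_mul_of_nonneg_left g2 hD1.le
      nlinarith [this]
    calc ((r*p^4+1) * (Dl lam (k+1) + 2*Dl lam (k+2))) * ((p^2*r)*(p^2*r+1))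
        = (r*p^4+1) * (p^2*r+1) * ((Dl lam (k+1) + 2*Dl lam (k+2)) * (p^2*r)) := c1
      _ ≤ (r*p^4+1) * (p^2*r+1) * (Dl lam (k+1) * (p^2*r + 2)) := c2
      _ = (r*p^4+1) * (p^2*r+2) * (Dl lam (k+1) * (p^2*r + 1)) := c3
      _ = (r*p^4+1) * (p^2*r+2) * (Dl lam k * (p^2-1)) := by rw [c4]
      _ ≤ Dl lam k * ((p^4-1) * (p^2*r) * (p^2*r+1)) := c5
      _ = (Dl lam k * (p^4-1)) * ((p^2*r)*(p^2*r+1)) := by ring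
  have := le_of_mul_le_mul_right main hfacpos
  nlinarith [this]

set_option maxHeartbeats 1000000 in
include hl in
lemma kill_even_core (k : ℕ) (hk : 1 ≤ k) (hkl : k ≤ ℓ) (y : ℝ)
    (hy : lam k - (lam k - lam (ℓ+1))/(Pr k ^4) ≤ y) :
    apL (W (k+1)) y ≤ lam (ℓ+1) := by
  have hgap := zone_gap lam hfix ℓ hl k hk hkl
  have hsum := kill_even_sum lam hfix k hk
  rw [apLW lam hfix (k+1) (by omega)]
  set p := Pr k with hp
  set r := Pr (k+1) with hr
  have hp2 : 2 ≤ p := Pr_ge_two k hk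
  have hr3 : 3 ≤ r := Pr_ge_three (k+1) (by omega)
  have hrpos : (0:ℝ) < r := by linarith
  have hp4pos : (0:ℝ) < p^4 := by positivity
  have hdl : lam k - lam (k+1) = Dl lam k := rfl
  have hD1 : 0 < Dl lam k := Dl_pos lam hfix k hk
  have h1 : Dl lam k - (lam k - lam (ℓ+1))/(p^4) ≤ y - lam (k+1) := by
    rw [← hdl]; linarith
  set G := lam (k+1) - lam (ℓ+1) with hG
  have hsplit : lam k - lam (ℓ+1) = Dl lam k + G := by
    rw [hG, ← hdl]; ring
  have key' : r*G*p^4 + (Dl lam k + G) ≤ Dl lam k * p^4 := by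
    have h2 : (r*p^4+1) * G ≤ (r*p^4+1) * (Dl lam (k+1) + 2*Dl lam (k+2)) :=
      mul_le_mul_of_nonneg_left hgap (by positivity)
    nlinarith [hsum, h2]
  have key : r * G ≤ Dl lam k - (Dl lam k + G)/p^4 := by
    have h3 : (Dl lam k + G)/p^4 ≤ Dl lam k - r*G := by
      rw [div_le_iff₀ hp4pos]
      nlinarith [key']
    linarith
  have h4 : Dl lam k - (Dl lam k + G)/p^4 ≤ y - lam (k+1) := by
    rw [hsplit] at h1; exact h1
  have h5 : G ≤ (y - lam (k+1))/r := by
    rw [le_div_iff₀ hrpos]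
    nlinarith [key, h4]
  have hGdef : G = lam (k+1) - lam (ℓ+1) := hG
  linarith

end Kill

end Pf
namespace Pf

/-! ### enumeration of the true blocks -/

def renum (σ : ℕ → Bool) (h : ∀ N, ∃ i, N ≤ i ∧ σ i = true) : ℕ → ℕ
  | 0 => Nat.find (h 0)
  | (n+1) => Nat.find (h (renum σ h n + 1))

lemma renum_true (σ : ℕ → Bool) (h : ∀ N, ∃ i, N ≤ i ∧ σ i = true) (n : ℕ) :
    σ (renum σ h n) = true := by
  cases n with
  | zero => exact (Nat.find_spec (h 0)).2
  | succ n => exact (Nat.find_spec (h (renum σ h n + 1))).2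

lemma renum_succ_gt (σ : ℕ → Bool) (h : ∀ N, ∃ i, N ≤ i ∧ σ i = true) (n : ℕ) :
    renum σ h n < renum σ h (n+1) := by
  have h1 := (Nat.find_spec (h (renum σ h n + 1))).1
  show renum σ h n < Nat.find (h (renum σ h n + 1))
  omega

lemma renum_between (σ : ℕ → Bool) (h : ∀ N, ∃ i, N ≤ i ∧ σ i = true) (n i : ℕ)
    (h1 : renum σ h n < i) (h2 : i < renum σ h (n+1)) : σ i = false := by
  have hmin := Nat.find_min (h (renum σ h n + 1))
    (show i < Nat.find (h (renum σ h n + 1)) from h2)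
  by_contra hb
  rw [Bool.not_eq_false] at hb
  exact absurd ⟨by omega, hb⟩ hmin

/-! ### run formulas -/

section CascadeSec

variable (lam : ℕ → ℝ) (hfix : ∀ n, 1 ≤ n → compList (Mword n) (lam n) = lam n)
variable (m : ℕ → ℕ) (hm : ∀ i, 2 ≤ m i)
variable (ℓ K : ℕ) (hl : 1 ≤ ℓ) (horb : ∀ t, K ≤ t → lam (ℓ+1) < orb m t)

omit hm hl horb in
include hfix in
lemma run_formula (k T : ℕ) (σ : ℕ → Bool) (τ : ℕ → ℕ) (hp : Parse m k T σ τ)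
    (hk : 1 ≤ k) (a : ℕ) :
    ∀ g : ℕ, (∀ t, t < g → σ (a + t) = false) →
    orb m (τ (a + g)) = lam k + (-1)^g * (orb m (τ a) - lam k) / Pr k ^ g := by
  intro g
  induction g with
  | zero => intro _; norm_num
  | succ g ih =>
      intro hfalse
      have hPpos : (0:ℝ) < Pr k := Pr_pos k hk
      have h1 : orb m (τ (a + g + 1)) = apL (bl k (σ (a+g))) (orb m (τ (a + g))) :=
        parse_orb m k T σ τ hp (a+g)
      have hσ : σ (a+g) = false := hfalse g (by omega)
      rw [hσ, bl_false] at h1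
      have hidx : a + (g+1) = (a + g) + 1 := by omega
      rw [hidx, h1, ih (fun t ht => hfalse t (by omega)), apLW lam hfix k hk]
      have hPn : Pr k ^ g ≠ 0 := by positivity
      field_simp
      ring

omit hfix hm hl horb in
lemma run_tau (k T : ℕ) (σ : ℕ → Bool) (τ : ℕ → ℕ) (hp : Parse m k T σ τ) (a : ℕ) :
    ∀ g : ℕ, (∀ t, t < g → σ (a + t) = false) → τ (a + g) = τ a + g * pl k := by
  intro g
  induction g with
  | zero => intro _; simp
  | succ g ih =>
      intro hfalse
      have h1 : τ (a + g + 1) = τ (a+g) + (bl k (σ (a+g))).length := (hp.2 (a+g)).2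
      have hσ : σ (a+g) = false := hfalse g (by omega)
      rw [hσ, bl_false, W_length] at h1
      have hidx : a + (g+1) = (a + g) + 1 := by omega
      rw [hidx, h1, ih (fun t ht => hfalse t (by omega))]
      ring

include hfix hl in
lemma true_landing_le (k : ℕ) (hk : 1 ≤ k) (hkl : k ≤ ℓ) (x : ℝ)
    (hx : lam (ℓ+1) < x) : apL (W (k+1)) x ≤ lam k := by
  rw [apLW lam hfix (k+1) (by omega)]
  have hr : 3 ≤ Pr (k+1) := Pr_ge_three (k+1) (by omega)
  have hrpos : (0:ℝ) < Pr (k+1) := by linarith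
  have hgap := zone_gap lam hfix ℓ hl k hk hkl
  have hD1 : 0 < Dl lam k := Dl_pos lam hfix k hk
  have hD2 : 0 < Dl lam (k+1) := Dl_pos lam hfix (k+1) (by omega)
  have hD3 : 0 < Dl lam (k+2) := Dl_pos lam hfix (k+2) (by omega)
  have hh1 : Dl lam (k+1) ≤ Dl lam k / 2 := Dl_half lam hfix k hk
  have hh2 : Dl lam (k+2) ≤ Dl lam (k+1) / 2 := Dl_half lam hfix (k+1) (by omega)
  have hdl : lam k - lam (k+1) = Dl lam k := rfl
  have hmono : lam (ℓ+1) ≤ lam (k+1) := by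
    have h := lam_mono lam hfix (k+1) (by omega) (ℓ - k)
    have hi : k + 1 + (ℓ - k) = ℓ + 1 := by omega
    rwa [hi] at h
  have h2 : (lam (k+1) - x) / Pr (k+1) ≤ (lam (k+1) - lam (ℓ+1)) / Pr (k+1) :=
    (div_le_div_iff_of_pos_right hrpos).2 (by linarith)
  have h3 : (lam (k+1) - lam (ℓ+1)) / Pr (k+1) ≤ lam (k+1) - lam (ℓ+1) :=
    div_le_self (by linarith) (by linarith)
  have heq : (lam (k+1) - x)/Pr (k+1) = -((x - lam (k+1))/Pr (k+1)) := by ring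
  linarith

include hfix hl horb in
lemma step (k : ℕ) (hk : 1 ≤ k) (hkl : k + 1 ≤ ℓ) (T : ℕ) (σ : ℕ → Bool) (τ : ℕ → ℕ)
    (hp : Parse m k T σ τ) (hKT : K ≤ T) :
    (∃ j Tt, 1 ≤ j ∧ j ≤ ℓ ∧ TailPer m j Tt) ∨
    (∃ T' σ' τ', Parse m (k+1) T' σ' τ' ∧ K ≤ T') := by
  have hKτ : ∀ i, K ≤ τ i := fun i => le_trans hKT (parse_mono m k T σ τ hp i)
  by_cases hinf : ∀ N, ∃ i, N ≤ i ∧ σ i = true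
  · -- infinitely many true blocks : recode
    right
    set r := renum σ hinf with hrdef
    have hrtrue : ∀ n, σ (r n) = true := renum_true σ hinf
    have hrlt : ∀ n, r n < r (n+1) := renum_succ_gt σ hinf
    have hrbet : ∀ n i, r n < i → i < r (n+1) → σ i = false := renum_between σ hinf
    set g : ℕ → ℕ := fun n => r (n+1) - (r n + 1) with hgdef
    have hrsucc : ∀ n, r (n+1) = r n + 1 + g n := by
      intro n
      have := hrlt n
      show r (n+1) = r n + 1 + (r (n+1) - (r n + 1))
      omega
    have hland : ∀ n, orb m (τ (r n + 1)) = apL (W (k+1)) (orb m (τ (r n))) := by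
      intro n
      have h1 := parse_orb m k T σ τ hp (r n)
      rwa [hrtrue n, bl_true] at h1
    have hsle : ∀ n, orb m (τ (r n + 1)) ≤ lam k := by
      intro n
      rw [hland n]
      exact true_landing_le lam hfix ℓ hl k hk (by omega) _ (horb _ (hKτ _))
    have hfalserun : ∀ n t, t < g n → σ (r n + 1 + t) = false := by
      intro n t ht
      apply hrbet n
      · omega
      · have := hrsucc n; omega
    have hg02 : ∀ n, g n = 0 ∨ g n = 2 := by
      intro n
      by_contra hc
      push_neg at hc
      set s := orb m (τ (r n + 1)) with hsdef
      have hsB : lam (ℓ+1) < s := horb _ (hKτ _)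
      have hslam : s ≤ lam k := hsle n
      have hy := run_formula lam hfix m k T σ τ hp hk (r n + 1) (g n) (hfalserun n)
      set y := orb m (τ (r n + 1 + g n)) with hydef
      have hyidx : r n + 1 + g n = r (n+1) := by have := hrsucc n; omega
      have hnext : orb m (τ (r (n+1) + 1)) = apL (W (k+1)) (orb m (τ (r (n+1)))) :=
        hland (n+1)
      have hnextB : lam (ℓ+1) < orb m (τ (r (n+1) + 1)) := horb _ (hKτ _)
      have hyy : orb m (τ (r (n+1))) = y := by rw [← hyidx]
      have hPpos : (0:ℝ) < Pr k := Pr_pos k hk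
      have hP2 : (2:ℝ) ≤ Pr k := Pr_ge_two k hk
      have hPgpos : (0:ℝ) < Pr k ^ (g n) := by positivity
      rcases Nat.even_or_odd (g n) with he | ho
      · have hg4 : 4 ≤ g n := by
          rcases he with ⟨t, ht⟩
          omega
        have hyval : y = lam k - (lam k - s)/Pr k ^ (g n) := by
          rw [hy, he.neg_one_pow]
          ring
        have hP4 : Pr k ^ 4 ≤ Pr k ^ (g n) :=
          pow_le_pow_right₀ (by linarith) hg4
        have hP4pos : (0:ℝ) < Pr k ^ 4 := by positivity
        have hbound : (lam k - s)/Pr k ^ (g n) ≤ (lam k - lam (ℓ+1))/Pr k ^ 4 :=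
          div_le_div₀ (by linarith) (by linarith) hP4pos hP4
        have hy4 : lam k - (lam k - lam (ℓ+1))/Pr k ^ 4 ≤ y := by
          rw [hyval]; linarith
        have hkill := kill_even_core lam hfix ℓ hl k hk (by omega) y hy4
        rw [hnext, hyy] at hnextB
        linarith
      · have hyval : y = lam k + (lam k - s)/Pr k ^ (g n) := by
          rw [hy, ho.neg_one_pow]
          ring
        have hyge : lam k ≤ y := by
          rw [hyval]
          have : 0 ≤ (lam k - s)/Pr k ^ (g n) := div_nonneg (by linarith) hPgpos.le
          linarith
        have hkill := kill_odd_core lam hfix ℓ hl k hk (by omega) y hyge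
        rw [hnext, hyy] at hnextB
        linarith
    have hτrun : ∀ n, τ (r (n+1)) = τ (r n + 1) + (g n) * pl k := by
      intro n
      have h1 := run_tau m k T σ τ hp (r n + 1) (g n) (hfalserun n)
      rwa [← hrsucc n] at h1
    have hτnext : ∀ n, τ (r (n+1) + 1) = τ (r (n+1)) + pl (k+1) := by
      intro n
      have h1 := (hp.2 (r (n+1))).2
      rwa [hrtrue (n+1), bl_true, W_length] at h1
    have hwinW : ∀ i, σ i = false → win m (τ i) (pl k) = W k := by
      intro i hσ
      have h1 := (hp.2 i).1
      rwa [hσ, bl_false, W_length] at h1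
    have hwinW1 : ∀ i, σ i = true → win m (τ i) (pl (k+1)) = W (k+1) := by
      intro i hσ
      have h1 := (hp.2 i).1
      rwa [hσ, bl_true, W_length] at h1
    have hτstep : ∀ i, σ i = false → τ (i+1) = τ i + pl k := by
      intro i hσ
      have h1 := (hp.2 i).2
      rwa [hσ, bl_false, W_length] at h1
    refine ⟨τ (r 0 + 1), fun n => decide (g n = 2), fun n => τ (r n + 1), ⟨rfl, ?_⟩, hKτ _⟩
    intro n
    dsimp only
    rcases hg02 n with h0 | h2
    · -- g n = 0 : block W (k+1)
      have hσ' : (decide (g n = 2)) = false := by rw [h0]; rfl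
      rw [hσ', bl_false]
      have hr1 : r (n+1) = r n + 1 := by have := hrsucc n; omega
      constructor
      · rw [W_length, ← hr1]
        exact hwinW1 (r (n+1)) (hrtrue (n+1))
      · rw [W_length, hr1]
        have hA := hτnext n
        rw [hr1] at hA
        exact hA
    · -- g n = 2 : block W (k+2) = W k ++ W k ++ W (k+1)
      have hσ' : (decide (g n = 2)) = true := by rw [h2]; rfl
      rw [hσ', bl_true]
      have hWrec : W (k+2) = W k ++ W k ++ W (k+1) := W_rec' lam hfix k hk
      have hlen : (W (k+2)).length = pl k + (pl k + pl (k+1)) := by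
        rw [W_length, pl_rec' lam hfix k hk]
        omega
      have hσa : σ (r n + 1) = false := by
        have := hfalserun n 0 (by omega)
        rwa [Nat.add_zero] at this
      have hσb : σ (r n + 2) = false := by
        have := hfalserun n 1 (by omega)
        rwa [show r n + 1 + 1 = r n + 2 from by omega] at this
      have hτa : τ (r n + 2) = τ (r n + 1) + pl k := by
        have := hτstep (r n + 1) hσa
        rwa [show r n + 1 + 1 = r n + 2 from by omega] at this
      have hτb : τ (r n + 3) = τ (r n + 2) + pl k := by
        have := hτstep (r n + 2) hσb
        rwa [show r n + 2 + 1 = r n + 3 from by omega] at this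
      have hr3 : r (n+1) = r n + 3 := by have := hrsucc n; omega
      have hσc : σ (r n + 3) = true := by rw [← hr3]; exact hrtrue (n+1)
      have hwc : win m (τ (r n + 3)) (pl (k+1)) = W (k+1) := hwinW1 _ hσc
      have hτc : τ (r n + 3 + 1) = τ (r n + 3) + pl (k+1) := by
        have h1 := (hp.2 (r n + 3)).2
        rwa [hσc, bl_true, W_length] at h1
      constructor
      · rw [hlen, hWrec]
        rw [win_append m _ (pl k) (pl k + pl (k+1)), win_append m _ (pl k) (pl (k+1))]
        rw [hwinW (r n + 1) hσa]
        rw [← hτa, hwinW (r n + 2) hσb, ← hτb, hwc]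
        rw [List.append_assoc]
      · rw [hlen]
        have hB : r (n+1) + 1 = r n + 3 + 1 := by omega
        rw [hB, hτc, hτb, hτa]
        omega
  · -- eventually all false : tail `W k` periodic
    left
    push_neg at hinf
    obtain ⟨N, hN⟩ := hinf
    have hfalse : ∀ i, N ≤ i → σ i = false := by
      intro i hi
      by_contra hb
      rw [Bool.not_eq_false] at hb
      exact absurd hb (hN i hi)
    have hτN : ∀ i, τ (N + i) = τ N + i * pl k := by
      intro i
      induction i with
      | zero => simp
      | succ i ih =>
          have h1 := (hp.2 (N+i)).2
          rw [hfalse (N+i) (by omega), bl_false, W_length] at h1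
          have hidx : N + (i+1) = (N + i) + 1 := by omega
          rw [hidx, h1, ih]
          ring
    refine ⟨k, τ N, hk, by omega, ?_⟩
    intro i
    have h1 := (hp.2 (N+i)).1
    rw [hfalse (N+i) (by omega), bl_false, W_length] at h1
    rw [← hτN i]
    exact h1

include hfix hl horb in
lemma top_level (T : ℕ) (σ : ℕ → Bool) (τ : ℕ → ℕ)
    (hp : Parse m ℓ T σ τ) (hKT : K ≤ T) : ∃ Tt, TailPer m ℓ Tt := by
  have hKτ : ∀ i, K ≤ τ i := fun i => le_trans hKT (parse_mono m ℓ T σ τ hp i)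
  have hfalse : ∀ i, σ i = false := by
    intro i
    by_contra hb
    rw [Bool.not_eq_false] at hb
    have h1 := parse_orb m ℓ T σ τ hp i
    rw [hb, bl_true] at h1
    have h2 : lam (ℓ+1) < orb m (τ i) := horb _ (hKτ i)
    have h3 : lam (ℓ+1) < orb m (τ (i+1)) := horb _ (hKτ (i+1))
    rw [h1, apLW lam hfix (ℓ+1) (by omega)] at h3
    have hrpos : (0:ℝ) < Pr (ℓ+1) := Pr_pos (ℓ+1) (by omega)
    have hdivpos : 0 < (orb m (τ i) - lam (ℓ+1))/Pr (ℓ+1) := div_pos (by linarith) hrpos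
    linarith
  have hτN : ∀ i, τ (0 + i) = τ 0 + i * pl ℓ := by
    intro i
    induction i with
    | zero => simp
    | succ i ih =>
        have h1 := (hp.2 (0+i)).2
        rw [hfalse (0+i), bl_false, W_length] at h1
        have hidx : 0 + (i+1) = (0 + i) + 1 := by omega
        rw [hidx, h1, ih]
        ring
  refine ⟨τ 0, ?_⟩
  intro i
  have h1 := (hp.2 (0+i)).1
  rw [hfalse (0+i), bl_false, W_length] at h1
  rw [← hτN i]
  exact h1

include hfix hm hl horb in
lemma digit23 (t : ℕ) (ht : K ≤ t) : m t = 2 ∨ m t = 3 := by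
  have h1 := horb t ht
  have h2 := horb (t+1) (by omega)
  have horb1 : orb m (t+1) = (1 - orb m t)/(m t : ℝ) := rfl
  have hd := hm t
  by_contra hc
  push_neg at hc
  have h4 : 4 ≤ m t := by omega
  have h4R : (4:ℝ) ≤ (m t : ℝ) := by exact_mod_cast h4
  have hBlb := lamLB lam hfix (ℓ+1) (by omega)
  have hx2 := (orb_mem m hm t).2
  have hub : orb m (t+1) ≤ (1 - orb m t)/4 := by
    rw [horb1]
    apply div_le_div_of_nonneg_left (by linarith) (by norm_num) h4R
  have hfin : orb m (t+1) < 388781/1695277 := by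
    have h5 : (1 - orb m t)/4 < (1 - 388781/1695277)/4 := by linarith
    have h6 : ((1:ℝ) - 388781/1695277)/4 < 388781/1695277 := by norm_num
    linarith
  linarith

include hfix hm hl horb in
lemma base_parse : ∃ T σ τ, Parse m 1 T σ τ ∧ K ≤ T := by
  refine ⟨K, fun i => decide (m (K + i) = 3), fun i => K + i, ⟨rfl, ?_⟩, le_refl K⟩
  intro i
  dsimp only
  rcases digit23 lam hfix m hm ℓ K hl horb (K+i) (by omega) with h2 | h3
  · have hσ : (decide (m (K+i) = 3)) = false := by
      apply decide_eq_false
      omega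
    rw [hσ, bl_false, W_one]
    constructor
    · apply win_congr
      intro q hq
      have hq0 : q = 0 := by simpa using hq
      subst hq0
      simpa using h2
    · simp only [List.length_cons, List.length_nil]
      omega
  · have hσ : (decide (m (K+i) = 3)) = true := by
      apply decide_eq_true
      omega
    rw [hσ, bl_true, W_two]
    constructor
    · apply win_congr
      intro q hq
      have hq0 : q = 0 := by simpa using hq
      subst hq0
      simpa using h3
    · simp only [List.length_cons, List.length_nil]
      omega

include hfix hm hl horb in
lemma exists_tailper : ∃ j Tt, 1 ≤ j ∧ j ≤ ℓ ∧ TailPer m j Tt := by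
  obtain ⟨T, σ, τ, hp, hKT⟩ := base_parse lam hfix m hm ℓ K hl horb
  suffices h : ∀ d k T' σ' τ', 1 ≤ k → k + d = ℓ → Parse m k T' σ' τ' → K ≤ T' →
      ∃ j Tt, 1 ≤ j ∧ j ≤ ℓ ∧ TailPer m j Tt by
    exact h (ℓ - 1) 1 T σ τ le_rfl (by omega) hp hKT
  intro d
  induction d with
  | zero =>
      intro k T' σ' τ' hk hkd hp' hKT'
      have hkℓ : k = ℓ := by omega
      subst hkℓ
      obtain ⟨Tt, hTt⟩ := top_level lam hfix m k K hl horb T' σ' τ' hp' hKT'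
      exact ⟨k, Tt, hk, le_refl k, hTt⟩
  | succ d ih =>
      intro k T' σ' τ' hk hkd hp' hKT'
      rcases step lam hfix m ℓ K hl horb k hk (by omega) T' σ' τ' hp' hKT'
        with done | ⟨T'', σ'', τ'', hp'', hKT''⟩
      · exact done
      · exact ih (k+1) T'' σ'' τ'' (by omega) (by omega) hp'' hKT''

include hfix hm hl horb in
lemma liminf_classify : ∃ j, 1 ≤ j ∧ j ≤ ℓ ∧ Filter.atTop.liminf (orb m) = lam j := by
  obtain ⟨j, Tt, hj1, hj2, hTt⟩ := exists_tailper lam hfix m hm ℓ K hl horb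
  exact ⟨j, hj1, hj2, tailper_liminf lam hfix m hm j Tt hj1 hTt⟩

end CascadeSec

end Pf
namespace Pf

section Final

variable (lam : ℕ → ℝ) (hfix : ∀ n, 1 ≤ n → compList (Mword n) (lam n) = lam n)

include hfix

lemma lam_anti (a b : ℕ) (ha : 1 ≤ a) (hab : a ≤ b) : lam b ≤ lam a := by
  obtain ⟨i, rfl⟩ : ∃ i, b = a + i := ⟨b - a, by omega⟩
  exact lam_mono lam hfix a ha i

lemma classify (x : ℝ) (hx : x ∈ Lset) (hgt : lam0 < x) :
    ∃ n, 1 ≤ n ∧ x = lam n := by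
  obtain ⟨m, hm, hlim⟩ := hx
  have htend := lam_tendsto lam hfix
  have hev : ∀ᶠ n in Filter.atTop, lam n < x := htend.eventually_lt_const hgt
  rw [Filter.eventually_atTop] at hev
  obtain ⟨N, hN⟩ := hev
  set L := max N 1 with hLdef
  have hL1 : 1 ≤ L := le_max_right _ _
  have hLx : lam (L+1) < x := hN (L+1) (by omega)
  have hbdd : Filter.IsBoundedUnder (· ≥ ·) Filter.atTop (orb m) :=
    Filter.isBoundedUnder_of ⟨0, fun t => (orb_mem m hm t).1⟩
  have hevorb : ∀ᶠ t in Filter.atTop, lam (L+1) < orb m t := by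
    apply Filter.eventually_lt_of_lt_liminf _ hbdd
    rw [hlim]
    exact hLx
  rw [Filter.eventually_atTop] at hevorb
  obtain ⟨K, hK⟩ := hevorb
  obtain ⟨j, hj1, hj2, hjlim⟩ :=
    liminf_classify lam hfix m hm L K hL1 (fun t ht => hK t ht)
  exact ⟨j, hj1, by rw [← hlim, hjlim]⟩

lemma gap_empty (n : ℕ) (hn : 1 ≤ n) :
    Set.Ioo (lam (n + 1)) (lam n) ∩ Lset = ∅ := by
  rw [Set.eq_empty_iff_forall_notMem]
  rintro x ⟨⟨hx1, hx2⟩, hxL⟩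
  have h0 : lam0 < x := lt_trans (lam0_lt lam hfix (n+1) (by omega)) hx1
  obtain ⟨j, hj1, rfl⟩ := classify lam hfix x hxL h0
  rcases le_or_gt j n with h | h
  · have := lam_anti lam hfix j n hj1 h
    linarith
  · have := lam_anti lam hfix (n+1) j (by omega) (by omega)
    linarith

lemma ioi_empty : Set.Ioi (lam 1) ∩ Lset = ∅ := by
  rw [Set.eq_empty_iff_forall_notMem]
  rintro x ⟨hx1, hxL⟩
  rw [Set.mem_Ioi] at hx1
  have h0 : lam0 < x := lt_trans (lam0_lt lam hfix 1 (by omega)) hx1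
  obtain ⟨j, hj1, rfl⟩ := classify lam hfix x hxL h0
  have := lam_anti lam hfix 1 j (by omega) hj1
  linarith

end Final

end Pf

theorem stmt19 (lam : ℕ → ℝ)
    (hfix : ∀ n, 1 ≤ n → compList (Mword n) (lam n) = lam n) :
    (∀ n, 1 ≤ n → Set.Ioo (lam (n + 1)) (lam n) ∩ Lset = ∅) ∧
      Set.Ioi (lam 1) ∩ Lset = ∅ ∧
      (∀ n, 1 ≤ n → lam n ∈ Lset) ∧ lam0 ∈ Lset ∧
      (∀ x ∈ Lset, lam0 < x → ∃ n, 1 ≤ n ∧ x = lam n) :=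
  ⟨fun n hn => Pf.gap_empty lam hfix n hn,
   Pf.ioi_empty lam hfix,
   fun n hn => Pf.lam_mem lam hfix n hn,
   Pf.lam0_mem lam hfix,
   fun x hx hgt => Pf.classify lam hfix x hx hgt⟩
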